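/- arXiv:0905.2707 — 9 statements merged into one kernel-verified Lean document; each statement's English description precedes it below -/
import Mathlib

section
/- Let C ⊆ ℝ^n be a rational polyhedral cone and let C_ℚ = C ∩ ℚ^n. Let g : C_ℚ → ℚ be a superadditive map which satisfies g(λx) = λg(x) for all x ∈ C_ℚ and all rational λ ≥ 0. Then g extends in a unique way to a superlinear function on C; that is, there is a unique superlinear function ĝ : C → ℝ with ĝ(x) = g(x) for all x ∈ C_ℚ. -/
/-!
The extension is the superlinear envelope: `G x` is the supremum of `∑ μ p * g p` over all
ways of writing `x = ∑ μ p • p` with real weights `μ p ≥ 0` at rational points `p` of the cone.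
It is superlinear by construction, and it extends `g` because `g` is already superadditive for
*real* weights: a `ℚ`-linear map `π : ℝ → ℚ` that is close to the identity on `1` and on the
finitely many weights turns a relation `∑ μ p • p = p₀` into the rational relation
`∑ π (μ p) • p = π 1 • p₀`, to which superadditivity and homogeneity of `g` apply; letting `π`
tend to the identity gives the inequality. Such `π` exist because a Hamel basis of `ℝ` over `ℚ`
can be sent to arbitrary rational approximations of itself.

Uniqueness: a point `x = ∑ c i • v i` of the cone lies between the rational points
`w = ∑ r i • v i` and `(1 + δ) • w` whenever `r ≤ c ≤ (1 + δ) r`. Superadditivity along the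
generators then determines any superlinear extension at `x` up to `δ` times a constant.
-/

open Finset Function Module Set Filter Topology
open scoped Pointwise

def IsSuperlinearOn (𝕜 : Type*) {E : Type*} [Semiring 𝕜] [PartialOrder 𝕜] [AddCommMonoid E]
    [Module 𝕜 E] (C : Set E) (F : E → 𝕜) : Prop :=
  ∀ x ∈ C, ∀ y ∈ C, ∀ a b : 𝕜, 0 ≤ a → 0 ≤ b → a * F x + b * F y ≤ F (a • x + b • y)

namespace IsSuperlinearOn

section OrderedSemiring

variable {𝕜 E : Type*} [Semiring 𝕜] [PartialOrder 𝕜] [AddCommMonoid E] [Module 𝕜 E]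
  {C : Set E} {F : E → 𝕜} {x y : E}

theorem add_le [IsOrderedRing 𝕜] (hF : IsSuperlinearOn 𝕜 C F) (hx : x ∈ C) (hy : y ∈ C) :
    F x + F y ≤ F (x + y) := by
  simpa using hF x hx y hy 1 1 zero_le_one zero_le_one

theorem mul_le_map_smul (hF : IsSuperlinearOn 𝕜 C F) (hx : x ∈ C) {t : 𝕜} (ht : 0 ≤ t) :
    t * F x ≤ F (t • x) := by
  simpa using hF x hx x hx t 0 ht le_rfl

theorem sum_mul_le [IsOrderedRing 𝕜] {D : PointedCone 𝕜 E} (hF : IsSuperlinearOn 𝕜 D F) {ι : Type*}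
    {s : Finset ι} {a : ι → 𝕜} {y : ι → E} (ha : ∀ i ∈ s, 0 ≤ a i) (hy : ∀ i ∈ s, y i ∈ D) :
    ∑ i ∈ s, a i * F (y i) ≤ F (∑ i ∈ s, a i • y i) := by
  classical
  induction s using Finset.induction_on with
  | empty => simpa using hF.mul_le_map_smul D.zero_mem le_rfl
  | insert i s hi ih =>
    rw [sum_insert hi, sum_insert hi]
    have hai := ha i (mem_insert_self i s)
    have hyi := hy i (mem_insert_self i s)
    calc a i * F (y i) + ∑ j ∈ s, a j * F (y j)
        ≤ F (a i • y i) + F (∑ j ∈ s, a j • y j) :=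
          add_le_add (hF.mul_le_map_smul hyi hai)
            (ih (fun j hj => ha j (mem_insert_of_mem hj)) fun j hj => hy j (mem_insert_of_mem hj))
      _ ≤ F (a i • y i + ∑ j ∈ s, a j • y j) :=
          hF.add_le (D.smul_mem hai hyi) <| D.sum_mem fun j hj =>
            D.smul_mem (ha j (mem_insert_of_mem hj)) (hy j (mem_insert_of_mem hj))

theorem add_sum_mul_le [IsOrderedRing 𝕜] {D : PointedCone 𝕜 E} (hF : IsSuperlinearOn 𝕜 D F)
    (hx : x ∈ D) {ι : Type*} {s : Finset ι} {a : ι → 𝕜} {y : ι → E} (ha : ∀ i ∈ s, 0 ≤ a i)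
    (hy : ∀ i ∈ s, y i ∈ D) : F x + ∑ i ∈ s, a i * F (y i) ≤ F (x + ∑ i ∈ s, a i • y i) :=
  (add_le_add le_rfl (hF.sum_mul_le ha hy)).trans <|
    hF.add_le hx (D.sum_mem fun i hi => D.smul_mem (ha i hi) (hy i hi))

end OrderedSemiring

theorem map_smul {𝕜 E : Type*} [Field 𝕜] [LinearOrder 𝕜] [IsStrictOrderedRing 𝕜]
    [AddCommGroup E] [Module 𝕜 E] {C : Set E} {F : E → 𝕜} (hF : IsSuperlinearOn 𝕜 C F) {x : E}
    (hx : x ∈ C) {t : 𝕜} (ht : 0 < t) (htx : t • x ∈ C) : F (t • x) = t * F x := by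
  refine le_antisymm ?_ (hF.mul_le_map_smul hx ht.le)
  have := hF.mul_le_map_smul htx (inv_nonneg.mpr ht.le)
  rw [inv_smul_smul₀ ht.ne'] at this
  rwa [inv_mul_le_iff₀ ht] at this

end IsSuperlinearOn

theorem PointedCone.isSuperlinearOn_of_add_le_of_map_smul {𝕜 E : Type*} [Semiring 𝕜]
    [PartialOrder 𝕜] [IsOrderedRing 𝕜] [AddCommMonoid E] [Module 𝕜 E] (D : PointedCone 𝕜 E)
    {F : E → 𝕜} (hadd : ∀ x ∈ D, ∀ y ∈ D, F x + F y ≤ F (x + y))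
    (hsmul : ∀ x ∈ D, ∀ t : 𝕜, 0 ≤ t → F (t • x) = t * F x) : IsSuperlinearOn 𝕜 D F := by
  intro x hx y hy a b ha hb
  rw [← hsmul x hx a ha, ← hsmul y hy b hb]
  exact hadd _ (D.smul_mem ha hx) _ (D.smul_mem hb hy)

theorem id_mem_closure_range_ratLinearMap :
    (id : ℝ → ℝ) ∈ closure (range fun π : ℝ →ₗ[ℚ] ℚ => ((↑) : ℚ → ℝ) ∘ π) := by
  let b := Basis.ofVectorSpace ℚ ℝ
  -- `Ψ y` is the `ℚ`-linear map sending the basis vector `b j` to `y j`.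
  let Ψ : (Basis.ofVectorSpaceIndex ℚ ℝ → ℝ) → ℝ → ℝ :=
    fun y x => (b.repr x).sum fun j c => c * y j
  have hΨ : Continuous Ψ := continuous_pi fun x =>
    continuous_finsetSum _ fun j _ => continuous_const.mul (continuous_apply j)
  have hb : Ψ b = id := by
    funext x
    simpa [Ψ, Finsupp.linearCombination_apply, Rat.smul_def] using b.linearCombination_repr x
  have hdense : DenseRange (Pi.map fun (_ : Basis.ofVectorSpaceIndex ℚ ℝ) (r : ℚ) => (r : ℝ)) :=
    DenseRange.piMap fun _ => Rat.denseRange_cast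
  rw [← hb]
  refine map_mem_closure hΨ (hdense.closure_range ▸ mem_univ _) ?_
  rintro _ ⟨r, rfl⟩
  refine ⟨b.constr ℚ r, funext fun x => ?_⟩
  simp [Ψ, Basis.constr_apply, Finsupp.sum]

noncomputable def ratCastLinearMap (ι : Type*) : (ι → ℚ) →ₗ[ℚ] ι → ℝ :=
  (Algebra.linearMap ℚ ℝ).compLeft ι

@[simp]
theorem ratCastLinearMap_apply {ι : Type*} (p : ι → ℚ) (j : ι) :
    ratCastLinearMap ι p j = p j := rfl

theorem ratCastLinearMap_sum_smul {ι κ : Type*} (s : Finset κ) (r : κ → ℚ) (v : κ → ι → ℚ) :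
    ratCastLinearMap ι (∑ i ∈ s, r i • v i) = ∑ i ∈ s, (r i : ℝ) • ratCastLinearMap ι (v i) := by
  simp [map_sum, Rat.cast_smul_eq_qsmul]

def PointedCone.ratPoints {ι : Type*} (K : PointedCone ℝ (ι → ℝ)) : PointedCone ℚ (ι → ℚ) :=
  .ofConeComb {p | ratCastLinearMap ι p ∈ K} ⟨0, by simp⟩ fun p hp q hq a ha b hb => by
    simpa [Rat.cast_smul_eq_qsmul] using
      K.add_mem (K.smul_mem (Rat.cast_nonneg.mpr ha) hp) (K.smul_mem (Rat.cast_nonneg.mpr hb) hq)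

theorem IsSuperlinearOn.sum_mul_le_of_sum_smul_eq {ι β : Type*} {K : PointedCone ℝ (ι → ℝ)}
    {g : (ι → ℚ) → ℚ} (hg : IsSuperlinearOn ℚ K.ratPoints g) {s : Finset β} {p : β → ι → ℚ}
    {w : β → ℝ} (hp : ∀ b ∈ s, p b ∈ K.ratPoints) (hw : ∀ b ∈ s, 0 < w b) {p₀ : ι → ℚ}
    (hp₀ : p₀ ∈ K.ratPoints) (h : ∑ b ∈ s, w b • ratCastLinearMap ι (p b) = ratCastLinearMap ι p₀) :
    ∑ b ∈ s, w b * g (p b) ≤ g p₀ := by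
  have key (π : ℝ →ₗ[ℚ] ℚ) (h1 : 0 < π 1) (hπw : ∀ b ∈ s, 0 < π (w b)) :
      ∑ b ∈ s, π (w b) * g (p b) ≤ π 1 * g p₀ := by
    have hπ (q : ℚ) (x : ℝ) : π (q * x) = q * π x := by
      rw [← Rat.smul_def, π.map_smul, smul_eq_mul]
    have hcomb : ∑ b ∈ s, π (w b) • p b = π 1 • p₀ := by
      funext j
      have hj := congrArg π (congrFun h j)
      simp only [Finset.sum_apply, Pi.smul_apply, smul_eq_mul, ratCastLinearMap_apply,
        map_sum] at hj
      rw [← mul_one ((p₀ j : ℝ)), hπ] at hj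
      simpa [mul_comm (w _), hπ, mul_comm (π _)] using hj
    rw [← hg.map_smul hp₀ h1 (K.ratPoints.smul_mem h1.le hp₀), ← hcomb]
    exact hg.sum_mul_le (fun b hb => (hπw b hb).le) hp
  let O : Set (ℝ → ℝ) := {f | 0 < f 1} ∩ ⋂ b ∈ s, {f | 0 < f (w b)}
  let F : Set (ℝ → ℝ) := {f | ∑ b ∈ s, f (w b) * g (p b) ≤ f 1 * g p₀}
  have hO : IsOpen O := (isOpen_lt continuous_const (continuous_apply 1)).inter
    (isOpen_biInter_finset fun b _ => isOpen_lt continuous_const (continuous_apply _))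
  have hF : IsClosed F := isClosed_le (by fun_prop) (by fun_prop)
  have hOF : O ∩ range (fun π : ℝ →ₗ[ℚ] ℚ => ((↑) : ℚ → ℝ) ∘ π) ⊆ F := by
    rintro _ ⟨hπ, π, rfl⟩
    simp only [O, mem_inter_iff, mem_iInter, mem_ofPred_eq, comp_apply, Rat.cast_pos] at hπ
    simpa [F] using (Rat.cast_le (K := ℝ)).mpr (key π hπ.1 hπ.2)
  simpa [F] using closure_minimal hOF hF
    (hO.inter_closure ⟨⟨show (0 : ℝ) < 1 from one_pos, mem_iInter₂.mpr hw⟩,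
      id_mem_closure_range_ratLinearMap⟩)

section SuperlinearEnvelope

variable {α E : Type*} [AddCommGroup E] [Module ℝ E] (e : α → E) (φ : α → ℝ)

def nonnegReps (x : E) : Set (α →₀ ℝ) :=
  {μ | 0 ≤ μ ∧ Finsupp.linearCombination ℝ e μ = x}

-- `sSup` returns the junk value `0` on empty or unbounded sets.
noncomputable def superlinearEnvelope (x : E) : ℝ :=
  sSup (Finsupp.linearCombination ℝ φ '' nonnegReps e x)

variable {e φ}

theorem smul_add_smul_mem_nonnegReps {x y : E} {μ ν : α →₀ ℝ} (hμ : μ ∈ nonnegReps e x)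
    (hν : ν ∈ nonnegReps e y) {a b : ℝ} (ha : 0 ≤ a) (hb : 0 ≤ b) :
    a • μ + b • ν ∈ nonnegReps e (a • x + b • y) :=
  ⟨add_nonneg (smul_nonneg ha hμ.1) (smul_nonneg hb hν.1), by simp [hμ.2, hν.2]⟩

theorem isSuperlinearOn_superlinearEnvelope (X : PointedCone ℝ E)
    (hne : ∀ x ∈ X, (nonnegReps e x).Nonempty)
    (hbdd : ∀ x ∈ X, BddAbove (Finsupp.linearCombination ℝ φ '' nonnegReps e x)) :
    IsSuperlinearOn ℝ X (superlinearEnvelope e φ) := by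
  intro x hx y hy a b ha hb
  let V (z : E) := Finsupp.linearCombination ℝ φ '' nonnegReps e z
  have hsub : a • V x + b • V y ⊆ V (a • x + b • y) := by
    rintro _ ⟨_, ⟨_, ⟨μ, hμ, rfl⟩, rfl⟩, _, ⟨_, ⟨ν, hν, rfl⟩, rfl⟩, rfl⟩
    exact ⟨a • μ + b • ν, smul_add_smul_mem_nonnegReps hμ hν ha hb, by simp⟩
  have hVx : (V x).Nonempty := (hne x hx).image _
  have hVy : (V y).Nonempty := (hne y hy).image _
  calc a * superlinearEnvelope e φ x + b * superlinearEnvelope e φ y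
      = sSup (a • V x) + sSup (b • V y) := by
        rw [Real.sSup_smul_of_nonneg ha, Real.sSup_smul_of_nonneg hb]; rfl
    _ = sSup (a • V x + b • V y) :=
        (csSup_add (hVx.smul_set) ((hbdd x hx).smul_of_nonneg ha) (hVy.smul_set)
          ((hbdd y hy).smul_of_nonneg hb)).symm
    _ ≤ superlinearEnvelope e φ (a • x + b • y) :=
        csSup_le_csSup (hbdd _ (X.add_mem (X.smul_mem ha hx) (X.smul_mem hb hy)))
          (hVx.smul_set.add hVy.smul_set) hsub

theorem superlinearEnvelope_apply_self
    (hφ : ∀ a, ∀ μ ∈ nonnegReps e (e a), Finsupp.linearCombination ℝ φ μ ≤ φ a) (a : α) :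
    superlinearEnvelope e φ (e a) = φ a := by
  refine IsGreatest.csSup_eq ⟨⟨Finsupp.single a 1, ⟨by simp, by simp⟩, by simp⟩, ?_⟩
  rintro _ ⟨μ, hμ, rfl⟩
  exact hφ a μ hμ

theorem bddAbove_image_nonnegReps
    (hφ : ∀ a, ∀ μ ∈ nonnegReps e (e a), Finsupp.linearCombination ℝ φ μ ≤ φ a) {x y : E}
    {ν : α →₀ ℝ} (hν : ν ∈ nonnegReps e y) {a : α} (h : x + y = e a) :
    BddAbove (Finsupp.linearCombination ℝ φ '' nonnegReps e x) := by
  refine ⟨φ a - Finsupp.linearCombination ℝ φ ν, ?_⟩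
  rintro _ ⟨μ, hμ, rfl⟩
  have := hφ a (μ + ν) <| by
    simpa [h] using smul_add_smul_mem_nonnegReps hμ hν zero_le_one zero_le_one
  rw [map_add] at this
  linarith

end SuperlinearEnvelope

theorem PointedCone.mem_hull_range_iff {κ E : Type*} [Fintype κ] [AddCommMonoid E] [Module ℝ E]
    {u : κ → E} {x : E} :
    x ∈ PointedCone.hull ℝ (range u) ↔ ∃ c : κ → ℝ, (∀ i, 0 ≤ c i) ∧ ∑ i, c i • u i = x := by
  rw [PointedCone.hull, Submodule.mem_span_range_iff_exists_fun]
  constructor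
  · rintro ⟨c, rfl⟩
    exact ⟨fun i => c i, fun i => (c i).2, rfl⟩
  · rintro ⟨c, hc, rfl⟩
    exact ⟨fun i => ⟨c i, hc i⟩, rfl⟩

theorem exists_rat_le_le_one_add_mul {c δ : ℝ} (hc : 0 ≤ c) (hδ : 0 < δ) :
    ∃ r : ℚ, 0 ≤ r ∧ (r : ℝ) ≤ c ∧ c ≤ (1 + δ) * r := by
  rcases hc.eq_or_lt with rfl | hc
  · exact ⟨0, by simp⟩
  obtain ⟨r, hcr, hrc⟩ := exists_rat_btwn (div_lt_self hc (by linarith : 1 < 1 + δ))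
  refine ⟨r, by exact_mod_cast ((div_pos hc (by positivity)).trans hcr).le, hrc.le, ?_⟩
  rw [div_lt_iff₀ (by positivity), mul_comm] at hcr
  exact hcr.le

section RatPolyhedralCone

variable {ι κ : Type*}

def ratPolyhedralCone (v : κ → ι → ℚ) : PointedCone ℝ (ι → ℝ) :=
  PointedCone.hull ℝ (range fun i => ratCastLinearMap ι (v i))

theorem mem_ratPoints_ratPolyhedralCone (v : κ → ι → ℚ) (i : κ) :
    v i ∈ (ratPolyhedralCone v).ratPoints :=
  PointedCone.subset_hull (mem_range_self i)

theorem IsSuperlinearOn.le_add_mul_of_eqOn_ratPoints [Fintype κ] (v : κ → ι → ℚ)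
    {F₁ F₂ : (ι → ℝ) → ℝ} (h₁ : IsSuperlinearOn ℝ (ratPolyhedralCone v) F₁)
    (h₂ : IsSuperlinearOn ℝ (ratPolyhedralCone v) F₂)
    (h : ∀ p ∈ (ratPolyhedralCone v).ratPoints,
      F₁ (ratCastLinearMap ι p) = F₂ (ratCastLinearMap ι p))
    {c : κ → ℝ} (hc : ∀ i, 0 ≤ c i) {δ : ℝ} (hδ : 0 < δ) :
    F₁ (∑ i, c i • ratCastLinearMap ι (v i)) ≤ F₂ (∑ i, c i • ratCastLinearMap ι (v i)) + δ *
      (F₂ (∑ i, c i • ratCastLinearMap ι (v i)) - ∑ i, c i * F₂ (ratCastLinearMap ι (v i))) := by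
  set K := ratPolyhedralCone v
  set u := fun i => ratCastLinearMap ι (v i)
  have hu (i : κ) (_ : i ∈ Finset.univ) : u i ∈ K := mem_ratPoints_ratPolyhedralCone v i
  have hx : ∑ i, c i • u i ∈ K := K.sum_mem fun i hi => K.smul_mem (hc i) (hu i hi)
  choose r hr0 hrc hcr using fun i => exists_rat_le_le_one_add_mul (hc i) hδ
  set w : ι → ℚ := ∑ i, r i • v i
  have hw : ratCastLinearMap ι w = ∑ i, (r i : ℝ) • u i := ratCastLinearMap_sum_smul _ _ _
  have hwK : w ∈ K.ratPoints := K.ratPoints.sum_mem fun i _ =>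
    K.ratPoints.smul_mem (hr0 i) (mem_ratPoints_ratPolyhedralCone v i)
  -- `∑ c i • u i` lies between `w` and `(1 + δ) • w` in the order of `K`.
  have hlow : F₂ (ratCastLinearMap ι w) + ∑ i, (c i - r i) * F₂ (u i) ≤ F₂ (∑ i, c i • u i) := by
    refine (h₂.add_sum_mul_le hwK (fun i _ => sub_nonneg.mpr (hrc i)) hu).trans_eq (congrArg F₂ ?_)
    rw [hw, ← sum_add_distrib]
    exact sum_congr rfl fun i _ => by module
  have hupp : F₁ (∑ i, c i • u i) + ∑ i, ((1 + δ) * r i - c i) * F₁ (u i) ≤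
      (1 + δ) * F₁ (ratCastLinearMap ι w) := by
    rw [← h₁.map_smul hwK (by positivity) (K.smul_mem (by positivity) hwK)]
    refine (h₁.add_sum_mul_le hx (fun i _ => sub_nonneg.mpr (hcr i)) hu).trans_eq (congrArg F₁ ?_)
    rw [hw, smul_sum, ← sum_add_distrib]
    exact sum_congr rfl fun i _ => by module
  have hv (i : κ) : F₁ (u i) = F₂ (u i) := h (v i) (mem_ratPoints_ratPolyhedralCone v i)
  simp only [h w hwK, hv] at hupp
  simp only [sub_mul, add_mul, sum_sub_distrib, sum_add_distrib, one_mul, mul_assoc, ← mul_sum]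
    at hlow hupp ⊢
  linear_combination hupp + (1 + δ) * hlow

theorem IsSuperlinearOn.le_of_eqOn_ratPoints [Fintype κ] (v : κ → ι → ℚ) {F₁ F₂ : (ι → ℝ) → ℝ}
    (h₁ : IsSuperlinearOn ℝ (ratPolyhedralCone v) F₁)
    (h₂ : IsSuperlinearOn ℝ (ratPolyhedralCone v) F₂)
    (h : ∀ p ∈ (ratPolyhedralCone v).ratPoints,
      F₁ (ratCastLinearMap ι p) = F₂ (ratCastLinearMap ι p))
    {x : ι → ℝ} (hx : x ∈ ratPolyhedralCone v) : F₁ x ≤ F₂ x := by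
  obtain ⟨c, hc, rfl⟩ := PointedCone.mem_hull_range_iff.mp hx
  refine ge_of_tendsto ?_ (eventually_nhdsWithin_of_forall (a := (0 : ℝ)) (s := Ioi 0) fun δ hδ =>
    h₁.le_add_mul_of_eqOn_ratPoints v h₂ h hc (δ := δ) hδ)
  exact (Continuous.tendsto' (by fun_prop) 0 _ (by simp)).mono_left nhdsWithin_le_nhds

noncomputable def ratExtension (K : PointedCone ℝ (ι → ℝ)) (g : (ι → ℚ) → ℚ) : (ι → ℝ) → ℝ :=
  superlinearEnvelope (fun p : K.ratPoints => ratCastLinearMap ι p) fun p => (g p : ℝ)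

theorem IsSuperlinearOn.linearCombination_le_of_mem_nonnegReps {K : PointedCone ℝ (ι → ℝ)}
    {g : (ι → ℚ) → ℚ} (hg : IsSuperlinearOn ℚ K.ratPoints g) (a : K.ratPoints)
    {μ : K.ratPoints →₀ ℝ}
    (hμ : μ ∈ nonnegReps (fun p : K.ratPoints => ratCastLinearMap ι p) (ratCastLinearMap ι a)) :
    Finsupp.linearCombination ℝ (fun p : K.ratPoints => (g p : ℝ)) μ ≤ g a := by
  obtain ⟨hμ0, hμa⟩ := hμ
  simp only [Finsupp.linearCombination_apply, Finsupp.sum, smul_eq_mul] at hμa ⊢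
  exact hg.sum_mul_le_of_sum_smul_eq (fun b _ => b.2)
    (fun b hb => (hμ0 b).lt_of_ne (Finsupp.mem_support_iff.mp hb).symm) a.2 hμa

theorem ratExtension_ratCast {K : PointedCone ℝ (ι → ℝ)} {g : (ι → ℚ) → ℚ}
    (hg : IsSuperlinearOn ℚ K.ratPoints g) {p : ι → ℚ} (hp : p ∈ K.ratPoints) :
    ratExtension K g (ratCastLinearMap ι p) = g p :=
  superlinearEnvelope_apply_self (fun a _ hμ => hg.linearCombination_le_of_mem_nonnegReps a hμ)
    ⟨p, hp⟩

theorem sum_single_mem_nonnegReps (v : κ → ι → ℚ) [Fintype κ] {c : κ → ℝ} (hc : ∀ i, 0 ≤ c i) :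
    ∑ i, Finsupp.single (⟨v i, mem_ratPoints_ratPolyhedralCone v i⟩ :
        (ratPolyhedralCone v).ratPoints) (c i) ∈
      nonnegReps (fun p : (ratPolyhedralCone v).ratPoints => ratCastLinearMap ι p)
        (∑ i, c i • ratCastLinearMap ι (v i)) :=
  ⟨sum_nonneg fun i _ => Finsupp.single_nonneg.mpr (hc i), by simp [map_sum]⟩

theorem isSuperlinearOn_ratExtension [Fintype κ] (v : κ → ι → ℚ) {g : (ι → ℚ) → ℚ}
    (hg : IsSuperlinearOn ℚ (ratPolyhedralCone v).ratPoints g) :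
    IsSuperlinearOn ℝ (ratPolyhedralCone v) (ratExtension (ratPolyhedralCone v) g) := by
  refine isSuperlinearOn_superlinearEnvelope _ (fun x hx => ?_) fun x hx => ?_
  · obtain ⟨c, hc, rfl⟩ := PointedCone.mem_hull_range_iff.mp hx
    exact ⟨_, sum_single_mem_nonnegReps v hc⟩
  · obtain ⟨c, hc, rfl⟩ := PointedCone.mem_hull_range_iff.mp hx
    -- `∑ c i • v i` lies below the rational point `∑ ⌈c i⌉₊ • v i` of the cone.
    let s (i : κ) : ℚ := ⌈c i⌉₊
    have hsc (i : κ) : 0 ≤ (s i : ℝ) - c i := sub_nonneg.mpr (by simpa [s] using Nat.le_ceil (c i))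
    have hs : ∑ i, s i • v i ∈ (ratPolyhedralCone v).ratPoints :=
      sum_mem fun i _ => PointedCone.smul_mem _ (by positivity) (mem_ratPoints_ratPolyhedralCone v i)
    refine bddAbove_image_nonnegReps (fun a _ hμ => hg.linearCombination_le_of_mem_nonnegReps a hμ)
      (sum_single_mem_nonnegReps v hsc) (a := ⟨_, hs⟩) ?_
    simp only [ratCastLinearMap_sum_smul, ← sum_add_distrib, ← add_smul, add_sub_cancel]

end RatPolyhedralCone

/-- **Superadditive positively homogeneous functions on rational points of a rational
polyhedral cone extend uniquely to superlinear functions on the cone.**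
Let `C ⊆ ℝⁿ` be a rational polyhedral cone (generated by the rational vectors `v i`), and
let `g : C ∩ ℚⁿ → ℚ` be superadditive with `g (λ • x) = λ * g x` for rational `λ ≥ 0`.
Then `g` extends in a unique way to a superlinear function `G : C → ℝ`. -/
theorem superadditive_rational_extends_to_superlinear
    (n k : ℕ) (v : Fin k → Fin n → ℚ)
    (C : Set (Fin n → ℝ))
    (hC : C = {x | ∃ c : Fin k → ℝ, (∀ i, 0 ≤ c i) ∧
      x = ∑ i, c i • fun j => ((v i j : ℝ))})
    (g : (Fin n → ℚ) → ℚ)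
    (hsuper : ∀ x y : Fin n → ℚ,
      (fun j => ((x j : ℝ))) ∈ C → (fun j => ((y j : ℝ))) ∈ C →
      g x + g y ≤ g (x + y))
    (hhom : ∀ x : Fin n → ℚ, (fun j => ((x j : ℝ))) ∈ C →
      ∀ l : ℚ, 0 ≤ l → g (l • x) = l * g x) :
    ∃ G : (Fin n → ℝ) → ℝ,
      ((∀ x ∈ C, ∀ y ∈ C, ∀ a b : ℝ, 0 ≤ a → 0 ≤ b →
          a * G x + b * G y ≤ G (a • x + b • y)) ∧
        (∀ x : Fin n → ℚ, (fun j => ((x j : ℝ))) ∈ C →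
          G (fun j => ((x j : ℝ))) = (g x : ℝ))) ∧
      ∀ G' : (Fin n → ℝ) → ℝ,
        ((∀ x ∈ C, ∀ y ∈ C, ∀ a b : ℝ, 0 ≤ a → 0 ≤ b →
            a * G' x + b * G' y ≤ G' (a • x + b • y)) ∧
          (∀ x : Fin n → ℚ, (fun j => ((x j : ℝ))) ∈ C →
            G' (fun j => ((x j : ℝ))) = (g x : ℝ))) →
        ∀ x ∈ C, G' x = G x := by
  obtain rfl : C = ratPolyhedralCone v := by
    ext x
    rw [hC, SetLike.mem_coe, ratPolyhedralCone, PointedCone.mem_hull_range_iff]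
    simp only [mem_ofPred_eq, eq_comm]
    rfl
  have hg : IsSuperlinearOn ℚ (ratPolyhedralCone v).ratPoints g :=
    PointedCone.isSuperlinearOn_of_add_le_of_map_smul _ (fun p hp q hq => hsuper p q hp hq) hhom
  have hG := isSuperlinearOn_ratExtension v hg
  refine ⟨ratExtension _ g, ⟨hG, fun p hp => ratExtension_ratCast hg hp⟩, ?_⟩
  rintro G' ⟨hG', hG'g⟩ x hx
  have hagree (p) (hp : p ∈ (ratPolyhedralCone v).ratPoints) :
      G' (ratCastLinearMap _ p) = ratExtension _ g (ratCastLinearMap _ p) :=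
    (hG'g p hp).trans (ratExtension_ratCast hg hp).symm
  exact le_antisymm (IsSuperlinearOn.le_of_eqOn_ratPoints v hG' hG hagree hx)
    (hG.le_of_eqOn_ratPoints v hG' (fun p hp => (hagree p hp).symm) hx)
end

section
/- Gordan's lemma: let S ⊆ ℕ^r be a finitely generated submonoid and let C ⊆ ℝ^r be a rational polyhedral cone. Then the monoid S ∩ C = {s ∈ S : s ∈ C} is finitely generated. -/
/-!
Clearing denominators, the cone `C` is spanned by integral vectors `wᵢ`, and its lattice points
form a finitely generated monoid: a lattice point `∑ cᵢ wᵢ` is `∑ ⌊cᵢ⌋ wᵢ` plus a lattice point of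
the parallelepiped `{∑ tᵢ wᵢ : 0 ≤ tᵢ ≤ 1}`, which is compact and so contains only finitely many.
It remains to intersect `S = ⟨gᵢ⟩` with the preimage of `⟨hⱼ⟩ ⊆ ℤʳ`: the intersection is the image
of `{(x, y) ∈ ℕᵖ × ℕ^q : ∑ xᵢ gᵢ = ∑ yⱼ hⱼ in ℤʳ}`, which is finitely generated by Dickson's lemma
(`AddSubmonoid.fg_eqLocusM`); this only needs cancellation in `ℤʳ`.
-/

open Set PointedCone Topology

theorem AddSubmonoid.FG.inf_comap {M N : Type*} [AddCommMonoid M] [AddCancelCommMonoid N]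
    {S : AddSubmonoid M} {T : AddSubmonoid N} (hS : S.FG) (hT : T.FG) (f : M →+ N) :
    (S ⊓ T.comap f).FG := by
  obtain ⟨s, rfl⟩ := hS
  obtain ⟨t, rfl⟩ := hT
  let φ := (Fintype.linearCombination ℕ ((↑) : s → M)).toAddMonoidHom.comp
    (AddMonoidHom.fst (s → ℕ) (t → ℕ))
  let ψ := (Fintype.linearCombination ℕ ((↑) : t → N)).toAddMonoidHom.comp
    (AddMonoidHom.snd (s → ℕ) (t → ℕ))
  convert (AddSubmonoid.fg_eqLocusM (f.comp φ) ψ).map φ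
  ext x
  simp only [AddSubmonoid.mem_inf, AddSubmonoid.mem_comap, AddSubmonoid.mem_closure_finset',
    AddSubmonoid.mem_map, AddMonoidHom.mem_eqLocusM, Prod.exists]
  constructor
  · rintro ⟨⟨a, rfl⟩, b, hb⟩
    exact ⟨a, b, by simpa [φ, ψ, Fintype.linearCombination_apply] using hb, rfl⟩
  · rintro ⟨a, b, hab, rfl⟩
    exact ⟨⟨a, rfl⟩, b, by simpa [φ, ψ, Fintype.linearCombination_apply] using hab⟩

theorem Rat.exists_nat_mul_eq_intCast {κ : Type*} [Fintype κ] (q : κ → ℚ) :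
    ∃ N : ℕ, N ≠ 0 ∧ ∃ z : κ → ℤ, ∀ k, (z k : ℚ) = N * q k := by
  classical
  refine ⟨∏ k, (q k).den, Finset.prod_ne_zero_iff.2 fun k _ => (q k).den_ne_zero, ?_⟩
  refine ⟨fun k => (q k).num * ∏ l ∈ Finset.univ.erase k, (q l).den, fun k => ?_⟩
  rw [← Finset.mul_prod_erase _ _ (Finset.mem_univ k)]
  push_cast
  rw [← Rat.den_mul_eq_num]
  ring

namespace PointedCone

variable {ι σ E : Type*} [AddCommGroup E] [Module ℝ E]

theorem mem_hull_range_iff_exists_nonneg [Fintype ι] (u : ι → E) {x : E} :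
    x ∈ hull ℝ (range u) ↔ ∃ c : ι → ℝ, (∀ i, 0 ≤ c i) ∧ x = ∑ i, c i • u i := by
  rw [Submodule.mem_span_range_iff_exists_fun]
  constructor
  · rintro ⟨c, rfl⟩
    exact ⟨fun i => c i, fun i => (c i).2, rfl⟩
  · rintro ⟨c, hc, rfl⟩
    exact ⟨fun i => ⟨c i, hc i⟩, rfl⟩

theorem hull_range_nsmul (u : ι → E) {N : ℕ} (hN : N ≠ 0) :
    hull ℝ (range fun i => N • u i) = hull ℝ (range u) := by
  have hunit : IsUnit (N : {c : ℝ // 0 ≤ c}) := (Nat.cast_ne_zero.2 hN).isUnit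
  rw [hull, hull, ← Submodule.span_smul_eq_of_isUnit (range u) _ hunit, Set.smul_set_range]
  simp only [Nat.cast_smul_eq_nsmul]

variable [Fintype ι] [Fintype σ]

theorem fg_comap_hull_range_intCast (w : ι → σ → ℤ) :
    ((hull ℝ (range fun i => (Int.castAddHom ℝ).compLeft σ (w i))).toAddSubmonoid.comap
      ((Int.castAddHom ℝ).compLeft σ)).FG := by
  set cast := (Int.castAddHom ℝ).compLeft σ
  set u : ι → σ → ℝ := fun i => cast (w i)
  let B : Set (σ → ℤ) := cast ⁻¹' ((fun t : ι → ℝ => ∑ i, t i • u i) '' Icc 0 1)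
  have hB : B.Finite := by
    refine IsCompact.finite_of_discrete ?_
    exact (IsClosedEmbedding.piMap fun _ => Int.isClosedEmbedding_coe_real).isCompact_preimage
      (isCompact_Icc.image (by fun_prop))
  rw [AddSubmonoid.fg_iff]
  refine ⟨range w ∪ B, le_antisymm ?_ ?_, (finite_range w).union hB⟩
  · rw [AddSubmonoid.closure_le]
    rintro z (⟨i, rfl⟩ | ⟨t, ht, hz⟩)
    · exact subset_hull ⟨i, rfl⟩
    · exact (mem_hull_range_iff_exists_nonneg u).2 ⟨t, fun i => ht.1 i, hz.symm⟩
  · intro z hz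
    obtain ⟨c, hc, hzc⟩ := (mem_hull_range_iff_exists_nonneg u).1 hz
    set n := fun i => ⌊c i⌋₊
    have hfract : z - ∑ i, n i • w i ∈ B := by
      refine ⟨fun i => c i - n i, ⟨fun i => ?_, fun i => ?_⟩, ?_⟩
      · simpa using Nat.floor_le (hc i)
      · show c i - n i ≤ 1
        linarith [Nat.lt_floor_add_one (c i)]
      · simp only [map_sub, map_sum, map_nsmul, sub_smul, Finset.sum_sub_distrib,
          ← Nat.cast_smul_eq_nsmul ℝ]
        rw [hzc]
    rw [← sub_add_cancel z (∑ i, n i • w i)]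
    exact add_mem (AddSubmonoid.subset_closure (mem_union_right _ hfract))
      (AddSubmonoid.sum_mem _ fun i _ => AddSubmonoid.nsmul_mem _
        (AddSubmonoid.subset_closure (mem_union_left B (mem_range_self i))) _)

theorem fg_comap_hull_range_ratCast (v : ι → σ → ℚ) :
    ((hull ℝ (range fun i j => (v i j : ℝ))).toAddSubmonoid.comap
      ((Int.castAddHom ℝ).compLeft σ)).FG := by
  obtain ⟨N, hN, w, hw⟩ := Rat.exists_nat_mul_eq_intCast (Function.uncurry v)
  have hwv : (fun i => (Int.castAddHom ℝ).compLeft σ fun j => w (i, j)) =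
      fun i => N • fun j => (v i j : ℝ) := by
    ext i j
    simpa using congrArg ((↑) : ℚ → ℝ) (hw (i, j))
  rw [← hull_range_nsmul _ hN, ← hwv]
  exact fg_comap_hull_range_intCast _

end PointedCone

/-- **Gordan's lemma.** Let `S ⊆ ℕʳ` be a finitely generated submonoid and let `C ⊆ ℝʳ`
be a rational polyhedral cone (generated by finitely many rational vectors `v i`). Then
`{s ∈ S : s ∈ C}` is a finitely generated submonoid of `ℕʳ`. -/
theorem gordan_lemma
    (r : ℕ) (S : AddSubmonoid (Fin r → ℕ)) (hS : S.FG)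
    (k : ℕ) (v : Fin k → Fin r → ℚ)
    (C : Set (Fin r → ℝ))
    (hC : C = {x | ∃ c : Fin k → ℝ, (∀ i, 0 ≤ c i) ∧
      x = ∑ i, c i • fun j => ((v i j : ℝ))}) :
    ∃ T : AddSubmonoid (Fin r → ℕ),
      (T : Set (Fin r → ℕ)) = {s | s ∈ S ∧ (fun j => ((s j : ℝ))) ∈ C} ∧ T.FG := by
  let K := (hull ℝ (range fun i j => (v i j : ℝ))).toAddSubmonoid
  refine ⟨S ⊓ (K.comap ((Int.castAddHom ℝ).compLeft (Fin r))).comap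
    ((Nat.castAddMonoidHom ℤ).compLeft (Fin r)), ?_, hS.inf_comap (fg_comap_hull_range_ratCast v) _⟩
  have hcast : ∀ s : Fin r → ℕ, (Int.castAddHom ℝ).compLeft _
      ((Nat.castAddMonoidHom ℤ).compLeft _ s) = fun j => (s j : ℝ) := fun s => by
    ext j; simp
  ext s
  simp [K, hC, hcast, mem_hull_range_iff_exists_nonneg]
end

section
/- Let C = ℝ₊e₁ + … + ℝ₊e_n ⊆ ℝ^m be a polyhedral cone and let f : C → V be a superlinear map into an ordered real vector space V, i.e. λf(x) + μf(y) ≤ f(λx + μy) for all x, y ∈ C and λ, μ ≥ 0. Assume there is a point s₀ = Σᵢ sᵢeᵢ with all sᵢ > 0 real such that f(s₀) = Σᵢ sᵢf(eᵢ). Then f(Σᵢ pᵢeᵢ) = Σᵢ pᵢf(eᵢ) for all real p₁, …, p_n ≥ 0; in particular, f is linear on C. -/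
/-!
The map `g q = f (∑ i, q i • e i)` is superlinear on the nonnegative orthant and, by
superadditivity, dominates the linear map `L q = ∑ i, q i • f (e i)` there. As `s` is an interior
point of the orthant, each `p ≥ 0` yields a splitting `s = t • p + (s - t • p)` inside the orthant
with `t > 0`, so `L s = g s ≥ t • g p + g (s - t • p) ≥ t • g p + L s - t • L p`, i.e. `g p ≤ L p`.
-/

open Filter Topology

def SuperlinearOn {E V : Type*} [AddCommMonoid E] [Module ℝ E] [AddCommMonoid V] [Module ℝ V]
    [LE V] (f : E → V) (C : Set E) : Prop :=
  ∀ x ∈ C, ∀ y ∈ C, ∀ a b : ℝ, 0 ≤ a → 0 ≤ b → a • f x + b • f y ≤ f (a • x + b • y)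

namespace SuperlinearOn

variable {E F V : Type*} [AddCommGroup E] [Module ℝ E] [AddCommGroup F] [Module ℝ F]
  [AddCommGroup V] [PartialOrder V] [Module ℝ V] {f : E → V}

lemma comp_linearMap {C : Set E} (hf : SuperlinearOn f C) (A : F →ₗ[ℝ] E) {D : Set F}
    (hAD : ∀ x ∈ D, A x ∈ C) : SuperlinearOn (f ∘ A) D := by
  intro x hx y hy a b ha hb
  simpa using hf _ (hAD x hx) _ (hAD y hy) a b ha hb

variable {C : PointedCone ℝ E}

lemma nonneg_map_zero (hf : SuperlinearOn f C) : 0 ≤ f 0 := by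
  simpa using hf 0 C.zero_mem 0 C.zero_mem 0 0 le_rfl le_rfl

lemma add_le (hf : SuperlinearOn f C) {x y : E} (hx : x ∈ C) (hy : y ∈ C) :
    f x + f y ≤ f (x + y) := by
  simpa using hf x hx y hy 1 1 zero_le_one zero_le_one

lemma smul_le (hf : SuperlinearOn f C) {x : E} (hx : x ∈ C) {a : ℝ} (ha : 0 ≤ a) :
    a • f x ≤ f (a • x) := by
  simpa using hf x hx 0 C.zero_mem a 0 ha le_rfl

lemma sum_smul_le [IsOrderedAddMonoid V] {ι : Type*} (hf : SuperlinearOn f C) (T : Finset ι)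
    {q : ι → ℝ} (hq : ∀ i ∈ T, 0 ≤ q i) {x : ι → E} (hx : ∀ i ∈ T, x i ∈ C) :
    ∑ i ∈ T, q i • f (x i) ≤ f (∑ i ∈ T, q i • x i) := by
  classical
  induction T using Finset.induction_on with
  | empty => simpa using hf.nonneg_map_zero
  | insert j T hj ih =>
    simp only [Finset.forall_mem_insert] at hq hx
    have hmem : ∑ i ∈ T, q i • x i ∈ C :=
      C.sum_mem fun i hi => C.smul_mem (hq.2 i hi) (hx.2 i hi)
    rw [Finset.sum_insert hj, Finset.sum_insert hj]
    calc q j • f (x j) + ∑ i ∈ T, q i • f (x i)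
        ≤ f (q j • x j) + f (∑ i ∈ T, q i • x i) :=
          add_le_add (hf.smul_le hx.1 hq.1) (ih hq.2 hx.2)
      _ ≤ f (q j • x j + ∑ i ∈ T, q i • x i) := hf.add_le (C.smul_mem hq.1 hx.1) hmem

lemma eqOn_of_le_of_eq_at_core [IsOrderedAddMonoid V] [PosSMulMono ℝ V] (hf : SuperlinearOn f C)
    (L : E →ₗ[ℝ] V) (hL : ∀ x ∈ C, L x ≤ f x) {s : E} (hs : ∀ p ∈ C, ∃ t > (0 : ℝ), s - t • p ∈ C)
    (hfs : f s = L s) : Set.EqOn f L C := by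
  intro p hp
  obtain ⟨t, ht, hr⟩ := hs p hp
  refine le_antisymm (le_of_smul_le_smul_left ?_ ht) (hL p hp)
  have key : t • f p + L (s - t • p) ≤ L s := calc
    t • f p + L (s - t • p) ≤ t • f p + f (s - t • p) := add_le_add_right (hL _ hr) _
    _ ≤ f (t • p + (s - t • p)) := by simpa using hf p hp _ hr t 1 ht.le zero_le_one
    _ = L s := by rw [add_sub_cancel, hfs]
  rwa [map_sub, map_smul, add_sub_left_comm, add_le_iff_nonpos_right, sub_nonpos] at key

end SuperlinearOn

lemma exists_pos_smul_le_of_forall_pos {ι : Type*} [Finite ι] {s : ι → ℝ} (hs : ∀ i, 0 < s i)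
    (p : ι → ℝ) : ∃ t > (0 : ℝ), t • p ≤ s := by
  have : ∀ᶠ t in 𝓝 (0 : ℝ), ∀ i, t * p i < s i := eventually_all.2 fun i =>
    (continuous_id.mul continuous_const).continuousAt.eventually_lt continuousAt_const
      (by simpa using hs i)
  obtain ⟨t, hts, ht⟩ := ((this.filter_mono nhdsWithin_le_nhds).and self_mem_nhdsWithin :
    ∀ᶠ t in 𝓝[>] (0 : ℝ), _).exists
  exact ⟨t, ht, fun i => (hts i).le⟩

/-- **Linearity of a superlinear map from one point (cone version).**
Let `C = ℝ₊e₁ + … + ℝ₊eₙ ⊆ ℝᵐ` be a polyhedral cone and `f : C → V` a superlinear map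
into an ordered real vector space `V`. If there is a point `s₀ = Σᵢ sᵢ • eᵢ` with all
`sᵢ > 0` real such that `f s₀ = Σᵢ sᵢ • f eᵢ`, then
`f (Σᵢ pᵢ • eᵢ) = Σᵢ pᵢ • f eᵢ` for all real `pᵢ ≥ 0`; in particular `f` is linear on `C`. -/
theorem superlinear_linear_of_linear_at_point
    {V : Type*} [AddCommGroup V] [PartialOrder V] [IsOrderedAddMonoid V] [Module ℝ V]
    (hsmul : ∀ c : ℝ, 0 ≤ c → ∀ a b : V, a ≤ b → c • a ≤ c • b)
    (m n : ℕ) (e : Fin n → Fin m → ℝ)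
    (C : Set (Fin m → ℝ))
    (hC : C = {x | ∃ c : Fin n → ℝ, (∀ i, 0 ≤ c i) ∧ x = ∑ i, c i • e i})
    (f : (Fin m → ℝ) → V)
    (hsuper : ∀ x ∈ C, ∀ y ∈ C, ∀ a b : ℝ, 0 ≤ a → 0 ≤ b →
      a • f x + b • f y ≤ f (a • x + b • y))
    (s : Fin n → ℝ) (hs : ∀ i, 0 < s i)
    (hadd : f (∑ i, s i • e i) = ∑ i, s i • f (e i)) :
    ∀ p : Fin n → ℝ, (∀ i, 0 ≤ p i) →
      f (∑ i, p i • e i) = ∑ i, p i • f (e i) := by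
  have : PosSMulMono ℝ V := ⟨fun c hc a b hab => hsmul c hc a b hab⟩
  set A := Fintype.linearCombination ℝ e
  set L := Fintype.linearCombination ℝ (f ∘ e)
  set Q := PointedCone.positive ℝ (Fin n → ℝ)
  have hg : SuperlinearOn (f ∘ A) Q := SuperlinearOn.comp_linearMap hsuper A fun q hq =>
    hC ▸ ⟨q, hq, Fintype.linearCombination_apply ℝ e q⟩
  have hLg : ∀ q ∈ Q, L q ≤ (f ∘ A) q := fun q hq => by
    simpa [A, L, Fintype.linearCombination_apply] using
      hg.sum_smul_le Finset.univ (fun i _ => hq i) (x := fun i => Pi.single i 1)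
        fun i _ => (Pi.single_nonneg.2 zero_le_one : (0 : Fin n → ℝ) ≤ _)
  have hcore : ∀ p ∈ Q, ∃ t > (0 : ℝ), s - t • p ∈ Q := fun p _ =>
    (exists_pos_smul_le_of_forall_pos hs p).imp fun _ => And.imp_right sub_nonneg.2
  exact fun p hp => hg.eqOn_of_le_of_eq_at_core L hLg hcore hadd (show 0 ≤ p from hp)
end

section
/- Let S ⊆ ℕ^n be a finitely generated saturated submonoid and let S'' ⊆ S be a finitely generated saturated submonoid. Let R = ⨁_{s ∈ S} R_s be an S-graded commutative ring which is finitely generated as an R₀-algebra. Then the S''-graded subring R'' = ⨁_{s ∈ S''} R_s is finitely generated as an R₀-algebra. -/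
/-!
Split the finitely many generators of `R` over `R₀` into homogeneous components `xᵢ ∈ R_{dᵢ}`.
Then `R` is the image of `R₀[Xᵢ]`, and the degree-`s` part of any element is an `R₀`-combination
of monomials `x^e` of weight `∑ eᵢ dᵢ = s`. The exponents whose weight lies in `S''` form the
preimage of `S''` under the weight map, which is finitely generated by Gordan's lemma: it is the
projection of the monoid of solutions of `∑ eᵢ dᵢ = ∑ aⱼ gⱼ` (the `gⱼ` generating `S''`), finitely
generated by Dickson's lemma. The monomials of a finite generating set of these exponents
generate `R''`.
-/

/-- The set of all finite nonnegative real linear combinations of elements of a set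
`S ⊆ ℕⁿ`, viewed inside `ℝⁿ`. -/
def natConeHull {n : ℕ} (S : Set (Fin n → ℕ)) : Set (Fin n → ℝ) :=
  {x | ∃ (k : ℕ) (c : Fin k → ℝ) (s : Fin k → Fin n → ℕ),
    (∀ i, 0 ≤ c i) ∧ (∀ i, s i ∈ S) ∧ x = ∑ i, c i • fun j => ((s i j : ℝ))}

/-- A submonoid `S ⊆ ℕⁿ` is saturated if `S = S_ℝ ∩ ℕⁿ`. -/
def IsSaturatedSubmonoid {n : ℕ} (S : AddSubmonoid (Fin n → ℕ)) : Prop :=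
  ∀ x : Fin n → ℕ, (fun j => ((x j : ℝ))) ∈ natConeHull (S : Set (Fin n → ℕ)) → x ∈ S

/-- For an internally graded ring `R = ⨁ₛ A s`, the subring `⨁_{s ∈ S} A s` spanned by the
homogeneous pieces with degrees in a submonoid `S` (realised as the subring generated by
those pieces). -/
def gradedSubringOn {R : Type*} [CommRing R]
    {n : ℕ} (A : (Fin n → ℕ) → AddSubgroup R) (S : Set (Fin n → ℕ)) : Subring R :=
  Subring.closure (⋃ s ∈ S, (A s : Set R))

open MvPolynomial

namespace AddSubmonoid

variable {M N : Type*} [AddCommMonoid M] [PartialOrder M] [WellQuasiOrderedLE M]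
  [IsOrderedCancelAddMonoid M] [CanonicallyOrderedAdd M] [AddCommMonoid N] [IsCancelAdd N]

theorem FG.comap {S : AddSubmonoid N} (hS : S.FG) (f : M →+ N) : (S.comap f).FG := by
  obtain ⟨G, rfl⟩ := hS
  let g : (G → ℕ) →+ N := (Fintype.linearCombination ℕ ((↑) : G → N)).toAddMonoidHom
  have hg : AddMonoidHom.mrange g = closure (G : Set N) := by
    rw [← Submodule.span_nat_eq_addSubmonoidClosure, ← Subtype.range_val (s := (G : Set N)),
      ← Fintype.range_linearCombination]
    rfl
  have hK : (closure (G : Set N)).comap f = ((f.comp (AddMonoidHom.fst M (G → ℕ))).eqLocusM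
      (g.comp (AddMonoidHom.snd M (G → ℕ)))).map (AddMonoidHom.fst M (G → ℕ)) := by
    ext x
    simp [← hg, AddMonoidHom.eqLocusM, eq_comm]
  rw [hK]
  exact (fg_eqLocusM _ _).map _

end AddSubmonoid

section Graded

variable {ι R : Type*} [AddCommMonoid ι] [CommRing R] (A : ι → AddSubgroup R)

section GradedMonoid

variable [SetLike.GradedMonoid A]

theorem closure_grade_zero_union_eq_adjoin (s : Set R) :
    Subring.closure ((A 0 : Set R) ∪ s) = (Algebra.adjoin (A 0) s).toSubring := by
  rw [Algebra.adjoin_eq_ring_closure]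
  congr
  ext r
  simp

variable {σ : Type*} {x : σ → R} {d : σ → ι}

theorem aeval_monomial_mem_graded (hx : ∀ i, x i ∈ A (d i)) (e : σ →₀ ℕ) (c : A 0) :
    aeval x (monomial e c) ∈ A (Finsupp.weight d e) := by
  rw [aeval_monomial, ← zero_add (Finsupp.weight d e)]
  exact SetLike.mul_mem_graded c.2 (SetLike.prod_pow_mem_graded A _ _ _ fun i _ => hx i)

theorem aeval_monomial_mem_adjoin {F : Set (σ →₀ ℕ)} {e : σ →₀ ℕ}
    (he : e ∈ AddSubmonoid.closure F) (c : A 0) :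
    aeval x (monomial e c) ∈
      Algebra.adjoin (A 0) ((fun f => aeval x (monomial f (1 : A 0))) '' F) := by
  rw [← mul_one c, ← smul_eq_mul, ← smul_monomial, map_smul]
  refine Subalgebra.smul_mem _ ?_ c
  induction he using AddSubmonoid.closure_induction with
  | mem f hf => exact Algebra.subset_adjoin ⟨f, hf, rfl⟩
  | zero => simp
  | add f g _ _ hf hg =>
    have : monomial (f + g) (1 : A 0) = monomial f 1 * monomial g 1 := by
      rw [monomial_mul, mul_one]
    rw [this, map_mul]
    exact mul_mem hf hg

end GradedMonoid

section GradedRing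

variable [DecidableEq ι] [GradedRing A]

theorem exists_finset_isHomogeneousElem_adjoin_eq_top {T : Finset R}
    (hT : Algebra.adjoin (A 0) (T : Set R) = ⊤) :
    ∃ H : Finset R, (∀ x ∈ H, SetLike.IsHomogeneousElem A x) ∧
      Algebra.adjoin (A 0) (H : Set R) = ⊤ := by
  classical
  let H := T.biUnion fun t => (DirectSum.decompose A t).support.image
    fun i => (DirectSum.decompose A t i : R)
  refine ⟨H, fun x hx => ?_, eq_top_iff.2 (hT ▸ Algebra.adjoin_le fun t ht => ?_)⟩
  · obtain ⟨t, -, hx⟩ := Finset.mem_biUnion.1 hx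
    obtain ⟨i, -, rfl⟩ := Finset.mem_image.1 hx
    exact ⟨i, (DirectSum.decompose A t i).2⟩
  · rw [← DirectSum.sum_support_decompose A t]
    exact Subalgebra.sum_mem _ fun i hi => Algebra.subset_adjoin <|
      Finset.mem_biUnion.2 ⟨t, ht, Finset.mem_image_of_mem _ hi⟩

variable {σ : Type*} {x : σ → R} {d : σ → ι}

theorem decompose_aeval_mem_adjoin (hx : ∀ i, x i ∈ A (d i)) {S : AddSubmonoid ι}
    {F : Set (σ →₀ ℕ)} (hF : AddSubmonoid.closure F = S.comap (Finsupp.weight d))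
    (p : MvPolynomial σ (A 0)) {s : ι} (hs : s ∈ S) :
    (DirectSum.decompose A (aeval x p) s : R) ∈
      Algebra.adjoin (A 0) ((fun f => aeval x (monomial f (1 : A 0))) '' F) := by
  induction p using MvPolynomial.induction_on' with
  | monomial e c =>
    have hmem := aeval_monomial_mem_graded A hx e c
    by_cases he : Finsupp.weight d e = s
    · rw [DirectSum.decompose_of_mem_same A (he ▸ hmem)]
      exact aeval_monomial_mem_adjoin A (hF ▸ (he ▸ hs : Finsupp.weight d e ∈ S)) c
    · rw [DirectSum.decompose_of_mem_ne A hmem he]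
      exact zero_mem _
  | add p q hp hq =>
    rw [map_add, DirectSum.decompose_add, DirectSum.add_apply, AddMemClass.coe_add]
    exact add_mem hp hq

theorem adjoin_aeval_monomial_eq_closure_iUnion (hx : ∀ i, x i ∈ A (d i))
    (htop : Algebra.adjoin (A 0) (Set.range x) = ⊤) {S : AddSubmonoid ι}
    {F : Set (σ →₀ ℕ)} (hF : AddSubmonoid.closure F = S.comap (Finsupp.weight d)) :
    (Algebra.adjoin (A 0) ((fun f => aeval x (monomial f (1 : A 0))) '' F)).toSubring =
      Subring.closure (⋃ s ∈ (S : Set ι), (A s : Set R)) := by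
  apply le_antisymm
  · rw [← closure_grade_zero_union_eq_adjoin, Subring.closure_le]
    rintro y (hy | ⟨f, hf, rfl⟩) <;> apply Subring.subset_closure <;> rw [Set.mem_iUnion₂]
    · exact ⟨0, zero_mem S, hy⟩
    · have hf' : f ∈ S.comap (Finsupp.weight d) := hF ▸ AddSubmonoid.subset_closure hf
      exact ⟨_, hf', aeval_monomial_mem_graded A hx f 1⟩
  · rw [Subring.closure_le, Set.iUnion₂_subset_iff]
    intro s hs y hy
    obtain ⟨p, rfl⟩ : y ∈ (aeval (R := A 0) x).range := by
      rw [← Algebra.adjoin_range_eq_range_aeval, htop]; trivial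
    rw [← DirectSum.decompose_of_mem_same A hy]
    exact decompose_aeval_mem_adjoin A hx hF p hs

end GradedRing

end Graded

theorem fg_of_saturated_subMonoid_general
    {R : Type*} [CommRing R]
    (n : ℕ) (S'' : AddSubmonoid (Fin n → ℕ))
    (hS''fg : S''.FG)
    (A : (Fin n → ℕ) → AddSubgroup R) [GradedRing A]
    (hfg : ∃ T : Finset R, Subring.closure ((A 0 : Set R) ∪ (T : Set R)) = ⊤) :
    ∃ T : Finset R,
      (T : Set R) ⊆ (gradedSubringOn A (S'' : Set (Fin n → ℕ)) : Set R) ∧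
      Subring.closure ((A 0 : Set R) ∪ (T : Set R)) =
        gradedSubringOn A (S'' : Set (Fin n → ℕ)) := by
  classical
  obtain ⟨T₀, hT₀⟩ := hfg
  rw [closure_grade_zero_union_eq_adjoin, Algebra.toSubring_eq_top] at hT₀
  obtain ⟨H, hH, hHtop⟩ := exists_finset_isHomogeneousElem_adjoin_eq_top A hT₀
  choose d hd using fun y : H => hH y y.2
  obtain ⟨F, hF⟩ := hS''fg.comap (Finsupp.weight (R := ℕ) d)
  have hR'' := adjoin_aeval_monomial_eq_closure_iUnion A hd (by rwa [Subtype.range_coe]) hF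
  refine ⟨F.image fun f => aeval (↑) (monomial f (1 : A 0)), ?_, ?_⟩
  · rw [gradedSubringOn, ← hR'', Finset.coe_image]
    exact Algebra.subset_adjoin
  · rw [closure_grade_zero_union_eq_adjoin, Finset.coe_image, hR'', gradedSubringOn]

/-- **Finite generation passes to saturated graded subrings.**
Let `S ⊆ ℕⁿ` be a finitely generated saturated submonoid and `S'' ⊆ S` a finitely
generated saturated submonoid. Let `R = ⨁_{s ∈ S} R_s` be an `S`-graded commutative ring
which is finitely generated as an `R₀`-algebra. Then the `S''`-graded subring
`R'' = ⨁_{s ∈ S''} R_s` is finitely generated as an `R₀`-algebra. -/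
theorem fg_of_saturated_subMonoid
    {R : Type*} [CommRing R]
    (n : ℕ) (S S'' : AddSubmonoid (Fin n → ℕ))
    (hSfg : S.FG) (hSsat : IsSaturatedSubmonoid S)
    (hS''fg : S''.FG) (hS''sat : IsSaturatedSubmonoid S'') (hle : S'' ≤ S)
    (A : (Fin n → ℕ) → AddSubgroup R) [GradedRing A]
    (hsupp : ∀ s : Fin n → ℕ, s ∉ S → A s = ⊥)
    (hfg : ∃ T : Finset R, Subring.closure ((A 0 : Set R) ∪ (T : Set R)) = ⊤) :
    ∃ T : Finset R,
      (T : Set R) ⊆ (gradedSubringOn A (S'' : Set (Fin n → ℕ)) : Set R) ∧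
      Subring.closure ((A 0 : Set R) ∪ (T : Set R)) =
        gradedSubringOn A (S'' : Set (Fin n → ℕ)) :=
  fg_of_saturated_subMonoid_general n S'' hS''fg A hfg
end

section
/- Let v ∈ ℝ^n be a point which is not contained in any proper rational affine subspace of ℝ^n. Then the set {mv + w : m ∈ ℕ, w ∈ ℤ^n} is dense in ℝ^n. -/
/-- The natural embedding `ℚⁿ → ℝⁿ`. -/
def ratToReal {n : ℕ} (q : Fin n → ℚ) : Fin n → ℝ := fun i => (q i : ℝ)

/-- An affine subspace of `ℝⁿ` is rational if it is the affine span of a set of rational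
points. -/
def IsRationalAffineSubspace {n : ℕ} (W : AffineSubspace ℝ (Fin n → ℝ)) : Prop :=
  ∃ s : Set (Fin n → ℚ), W = affineSpan ℝ (ratToReal '' s)

/-! The closure `G` of `ℤ v + ℤⁿ` is a closed subgroup of `ℝⁿ`. Splitting off the largest
subspace it contains, what remains is discrete, hence a lattice in a complementary subspace; so a
proper closed subgroup lies in `{x | f x ∈ ℤ}` for a nonzero linear functional `f`. Since `ℤⁿ ⊆ G`,
such an `f` has integer coefficients, and `f v ∈ ℤ` would put `v` on a proper rational
hyperplane. Hence `G = ℝⁿ`: the multiples of `v` are dense in the torus `ℝⁿ / ℤⁿ`, and by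
compactness of the torus already its `ℕ`-multiples are. -/

open Filter Topology Matrix

theorem tendsto_floor_div_mul {ι : Type*} {l : Filter ι} {r : ι → ℝ} (hr : Tendsto r l (𝓝 0))
    (hpos : ∀ᶠ i in l, 0 < r i) (t : ℝ) : Tendsto (fun i => ⌊t / r i⌋ * r i) l (𝓝 t) := by
  have hlower : Tendsto (fun i => t - r i) l (𝓝 t) := by simpa using tendsto_const_nhds.sub hr
  refine tendsto_of_tendsto_of_tendsto_of_le_of_le' hlower tendsto_const_nhds ?_ ?_
  · filter_upwards [hpos] with i hi
    have := mul_le_mul_of_nonneg_right (Int.sub_one_lt_floor (t / r i)).le hi.le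
    rwa [sub_mul, div_mul_cancel₀ _ hi.ne', one_mul] at this
  · filter_upwards [hpos] with i hi
    simpa [div_mul_cancel₀ _ hi.ne'] using mul_le_mul_of_nonneg_right (Int.floor_le (t / r i)) hi.le

namespace Submodule

variable {E : Type*} [NormedAddCommGroup E] [NormedSpace ℝ E] [FiniteDimensional ℝ E]
  [Nontrivial E]

theorem exists_ne_zero_forall_mem_intCast_of_discreteTopology (L : Submodule ℤ E)
    [DiscreteTopology L] : ∃ f : E →ₗ[ℝ] ℝ, f ≠ 0 ∧ ∀ x ∈ L, ∃ m : ℤ, f x = m := by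
  by_cases hspan : span ℝ (L : Set E) = ⊤
  · have : IsZLattice ℝ L := ⟨hspan⟩
    set b := Module.Free.chooseBasis ℤ L
    set B := b.ofZLatticeBasis ℝ L
    obtain ⟨i⟩ := B.index_nonempty
    refine ⟨B.coord i, fun h => by simpa [B] using LinearMap.congr_fun h (B i), fun x hx => ?_⟩
    exact ⟨b.repr ⟨x, hx⟩ i, b.ofZLatticeBasis_repr_apply ℝ L ⟨x, hx⟩ i⟩
  · obtain ⟨f, hf, hLf⟩ := exists_le_ker_of_lt_top _ (lt_top_iff_ne_top.2 hspan)
    exact ⟨f, hf, fun x hx => ⟨0, by simpa using hLf (subset_span hx)⟩⟩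

end Submodule

namespace AddSubgroup

variable {E : Type*}

def linealSpace (R : Type*) [Ring R] [AddCommGroup E] [Module R E] (G : AddSubgroup E) :
    Submodule R E where
  carrier := {x | ∀ t : R, t • x ∈ G}
  add_mem' hx hy t := by simpa [smul_add] using G.add_mem (hx t) (hy t)
  zero_mem' t := by simp
  smul_mem' c x hx t := by simpa [smul_smul] using hx (t * c)

theorem mem_of_mem_linealSpace {R : Type*} [Ring R] [AddCommGroup E] [Module R E]
    {G : AddSubgroup E} {x : E} (hx : x ∈ G.linealSpace R) : x ∈ G := by
  simpa using hx 1

variable [NormedAddCommGroup E] [NormedSpace ℝ E] [FiniteDimensional ℝ E] {G : AddSubgroup E}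

/-- Directions of elements of `G` accumulating at `0` have a limit `u` on the unit sphere, and
`ℝ u ⊆ G` because `t u` is the limit of the multiples `⌊t / ‖x‖⌋ • x` of such elements `x`. -/
theorem exists_ne_zero_forall_smul_mem (hG : IsClosed (G : Set E)) (h0 : AccPt (0 : E) (𝓟 G)) :
    ∃ u ≠ 0, ∀ t : ℝ, t • u ∈ G := by
  have : (𝓝[≠] (0 : E) ⊓ 𝓟 G).NeBot := h0
  set 𝒰 := Ultrafilter.of (𝓝[≠] (0 : E) ⊓ 𝓟 G)
  have h𝒰 : (𝒰 : Filter E) ≤ 𝓝[≠] 0 ⊓ 𝓟 G := Ultrafilter.of_le _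
  have hmem : ∀ᶠ x in (𝒰 : Filter E), x ∈ G ∧ x ≠ 0 := by
    filter_upwards [h𝒰.trans inf_le_right (mem_principal_self _),
      h𝒰.trans inf_le_left self_mem_nhdsWithin] with x hxG hx0 using ⟨hxG, hx0⟩
  have hnorm : Tendsto (‖·‖) (𝒰 : Filter E) (𝓝 0) := by
    simpa using (continuous_norm.tendsto 0).mono_left (h𝒰.trans (inf_le_left.trans inf_le_left))
  obtain ⟨u, hu, hlim⟩ := (isCompact_sphere (0 : E) 1).ultrafilter_le_nhds
    (𝒰.map fun x => ‖x‖⁻¹ • x) (by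
      rw [Ultrafilter.coe_map, le_principal_iff]
      exact Filter.mem_map.2 (hmem.mono fun x hx => by simp [norm_smul, hx.2]))
  refine ⟨u, ne_zero_of_mem_unit_sphere ⟨u, hu⟩, fun t => ?_⟩
  have hpos : ∀ᶠ x in (𝒰 : Filter E), 0 < ‖x‖ := by
    filter_upwards [hmem] with x hx using norm_pos_iff.2 hx.2
  refine hG.mem_of_tendsto ((tendsto_floor_div_mul hnorm hpos t).smul hlim) ?_
  filter_upwards [hmem] with x hx
  rw [smul_smul, mul_assoc, mul_inv_cancel₀ (norm_ne_zero_iff.2 hx.2), mul_one,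
    Int.cast_smul_eq_zsmul]
  exact G.zsmul_mem hx.1 _

theorem discreteTopology_of_linealSpace_eq_bot (hG : IsClosed (G : Set E))
    (hL : G.linealSpace ℝ = ⊥) : DiscreteTopology G := by
  have h0 : ¬AccPt (0 : E) (𝓟 G) := fun h0 => by
    obtain ⟨u, hu, hline⟩ := exists_ne_zero_forall_smul_mem hG h0
    exact hu ((Submodule.eq_bot_iff _).1 hL u hline)
  rw [accPt_iff_frequently, not_frequently] at h0
  rw [discreteTopology_iff_isOpen_singleton_zero, isOpen_iff_mem_nhds]
  rintro _ rfl
  filter_upwards [(continuous_subtype_val.tendsto 0).eventually h0] with x hx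
  by_contra hne
  exact hx ⟨fun h => hne (Subtype.ext h), x.2⟩

/-- Split off the largest subspace `L ⊆ G`: on a complement `K` of `L`, the subgroup `G ∩ K`
contains no line, hence is discrete, and `G` projects onto it along `L`. -/
theorem exists_ne_zero_forall_mem_intCast_of_isClosed (hG : IsClosed (G : Set E)) (hne : G ≠ ⊤) :
    ∃ f : E →ₗ[ℝ] ℝ, f ≠ 0 ∧ ∀ x ∈ G, ∃ m : ℤ, f x = m := by
  set L := G.linealSpace ℝ
  obtain ⟨K, hLK⟩ := L.exists_isCompl
  have : Nontrivial K := by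
    refine Submodule.nontrivial_iff_ne_bot.2 fun hK => hne <| eq_top_iff.2 fun x _ => ?_
    exact mem_of_mem_linealSpace ((eq_top_of_isCompl_bot (hK ▸ hLK)).symm ▸ Submodule.mem_top)
  set H : AddSubgroup K := G.comap K.subtype.toAddMonoidHom
  have : DiscreteTopology H.toIntSubmodule := by
    refine discreteTopology_of_linealSpace_eq_bot (hG.preimage continuous_subtype_val) ?_
    refine (Submodule.eq_bot_iff _).2 fun u hu => ?_
    have huL : (u : E) ∈ L ⊓ K := ⟨fun t => hu t, u.2⟩
    simpa [hLK.inf_eq_bot] using huL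
  obtain ⟨f, hf0, hf⟩ :=
    Submodule.exists_ne_zero_forall_mem_intCast_of_discreteTopology H.toIntSubmodule
  set P := K.projectionOnto L hLK.symm
  refine ⟨f ∘ₗ P, fun h => hf0 (LinearMap.ext fun k => ?_), fun x hx => hf _ ?_⟩
  · have hk := LinearMap.congr_fun h k
    rwa [LinearMap.comp_apply, Submodule.projectionOnto_apply_left] at hk
  · have hxL : x - K.projection L hLK.symm x ∈ G :=
      mem_of_mem_linealSpace (Submodule.sub_projection_mem hLK.symm x)
    have hPx := G.sub_mem hx hxL
    rwa [sub_sub_cancel, Submodule.projection_apply] at hPx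

end AddSubgroup

theorem sum_smul_single_sub_single_div_eq_self {K ι : Type*} [Field K] [Fintype ι]
    [DecidableEq ι] {a y : ι → K} (hy : a ⬝ᵥ y = 0) (i₀ : ι) :
    ∑ j, y j • (Pi.single j 1 - Pi.single i₀ (a j / a i₀)) = y := by
  have : ∑ j, y j • Pi.single (M := fun _ => K) i₀ (a j / a i₀) = 0 := by
    ext i
    simp only [Finset.sum_apply, Pi.smul_apply, Pi.single_apply, smul_ite, smul_zero,
      Finset.sum_ite_irrel, Finset.sum_const_zero, Pi.zero_apply]
    rw [dotProduct_comm, dotProduct] at hy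
    simp [mul_div_assoc', ← Finset.sum_div, hy]
  simp only [smul_sub, Finset.sum_sub_distrib, this, sub_zero]
  exact (pi_eq_sum_univ' y).symm

section RationalHyperplane

variable {n : ℕ}

/-- The real hyperplane `ratToReal c ⬝ᵥ x = r` (see `mem_rationalHyperplane`), presented as the
affine span of its rational points so that it is rational by construction. -/
def rationalHyperplane (c : Fin n → ℚ) (r : ℚ) : AffineSubspace ℝ (Fin n → ℝ) :=
  affineSpan ℝ (ratToReal '' {q | c ⬝ᵥ q = r})

@[simp]
theorem ratToReal_add (p q : Fin n → ℚ) : ratToReal (p + q) = ratToReal p + ratToReal q := by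
  ext; simp [ratToReal]

@[simp]
theorem ratToReal_sub (p q : Fin n → ℚ) : ratToReal (p - q) = ratToReal p - ratToReal q := by
  ext; simp [ratToReal]

@[simp]
theorem ratToReal_single (i : Fin n) (a : ℚ) :
    ratToReal (Pi.single i a) = Pi.single i (a : ℝ) := by
  ext j; by_cases h : j = i <;> simp [ratToReal, h]

@[simp]
theorem ratToReal_dotProduct (c q : Fin n → ℚ) :
    ratToReal c ⬝ᵥ ratToReal q = ((c ⬝ᵥ q : ℚ) : ℝ) := by
  simp [ratToReal, dotProduct]

variable {c : Fin n → ℚ}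

theorem mem_rationalHyperplane {i₀ : Fin n} (hc : c i₀ ≠ 0) {r : ℚ} {x : Fin n → ℝ}
    (hx : ratToReal c ⬝ᵥ x = r) : x ∈ rationalHyperplane c r := by
  set p : Fin n → ℚ := Pi.single i₀ (r / c i₀)
  have hp : ratToReal p ∈ rationalHyperplane c r :=
    subset_affineSpan _ _ ⟨_, by simp [p]; field_simp, rfl⟩
  have hdir : ∀ j, ratToReal (Pi.single j 1 - Pi.single i₀ (c j / c i₀)) ∈
      (rationalHyperplane c r).direction := by
    intro j
    have hpd : ratToReal (p + (Pi.single j 1 - Pi.single i₀ (c j / c i₀))) ∈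
        rationalHyperplane c r :=
      subset_affineSpan _ _ ⟨_, by simp [p, dotProduct_add, dotProduct_sub]; field_simp; ring, rfl⟩
    simpa using AffineSubspace.vsub_mem_direction hpd hp
  have hxp : ratToReal c ⬝ᵥ (x - ratToReal p) = 0 := by
    rw [dotProduct_sub, hx, ratToReal_dotProduct]
    simp [p]; field_simp; ring
  rw [← vsub_vadd x (ratToReal p), vsub_eq_sub,
    ← sum_smul_single_sub_single_div_eq_self hxp i₀]
  refine AffineSubspace.vadd_mem_of_mem_direction ?_ hp
  refine Submodule.sum_mem _ fun j _ => Submodule.smul_mem _ _ ?_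
  simpa [ratToReal] using hdir j

theorem rationalHyperplane_ne_top (hc : c ≠ 0) (r : ℚ) : rationalHyperplane c r ≠ ⊤ := by
  intro htop
  obtain ⟨i, hi⟩ := Function.ne_iff.1 hc
  have hle : (rationalHyperplane c r).direction ≤
      LinearMap.ker (dotProductEquiv ℝ (Fin n) (ratToReal c)) := by
    rw [rationalHyperplane, direction_affineSpan, vectorSpan_def, Submodule.span_le]
    rintro _ ⟨_, ⟨p, hp, rfl⟩, _, ⟨q, hq, rfl⟩, rfl⟩
    simp_all [dotProduct_sub]
  have hsingle : Pi.single i 1 ∈ (rationalHyperplane c r).direction := by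
    rw [htop, AffineSubspace.direction_top]
    exact Submodule.mem_top
  exact hi (by simpa [ratToReal] using hle hsingle)

theorem ratToReal_dotProduct_ne_of_forall_rational {v : Fin n → ℝ}
    (hv : ∀ W : AffineSubspace ℝ (Fin n → ℝ), IsRationalAffineSubspace W → v ∈ W →
      (W : Set (Fin n → ℝ)) = Set.univ)
    (hc : c ≠ 0) (r : ℚ) : ratToReal c ⬝ᵥ v ≠ r := by
  intro hvr
  obtain ⟨i, hi⟩ := Function.ne_iff.1 hc
  exact rationalHyperplane_ne_top hc r <| SetLike.coe_injective <|
    hv _ ⟨_, rfl⟩ (mem_rationalHyperplane hi hvr)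

end RationalHyperplane

section Torus

variable {n : ℕ}

def toTorus (n : ℕ) : (Fin n → ℝ) →+ (Fin n → UnitAddCircle) :=
  (QuotientAddGroup.mk' (AddSubgroup.zmultiples (1 : ℝ))).compLeft (Fin n)

theorem isOpenQuotientMap_toTorus : IsOpenQuotientMap (toTorus n) :=
  IsOpenQuotientMap.piMap fun _ => QuotientAddGroup.isOpenQuotientMap_mk

theorem toTorus_eq_zero_iff {x : Fin n → ℝ} :
    toTorus n x = 0 ↔ ∃ w : Fin n → ℤ, x = fun i => (w i : ℝ) := by
  simp only [funext_iff, Pi.zero_apply, toTorus, AddMonoidHom.compLeft_apply, Function.comp_apply,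
    QuotientAddGroup.mk'_apply, QuotientAddGroup.eq_zero_iff, AddSubgroup.mem_zmultiples_iff,
    zsmul_eq_mul, mul_one, @eq_comm ℝ (x _)]
  exact Classical.skolem

theorem AddSubgroup.eq_top_of_isClosed_of_forall_single_mem {v : Fin n → ℝ}
    (hv : ∀ W : AffineSubspace ℝ (Fin n → ℝ), IsRationalAffineSubspace W → v ∈ W →
      (W : Set (Fin n → ℝ)) = Set.univ)
    {G : AddSubgroup (Fin n → ℝ)} (hG : IsClosed (G : Set (Fin n → ℝ)))
    (hsingle : ∀ i, Pi.single i 1 ∈ G) (hvG : v ∈ G) : G = ⊤ := by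
  by_contra hne
  obtain ⟨f, hf0, hf⟩ := G.exists_ne_zero_forall_mem_intCast_of_isClosed hG hne
  choose c hc using fun i => hf _ (hsingle i)
  have hfc : ∀ x, f x = ratToReal (fun i => (c i : ℚ)) ⬝ᵥ x := fun x => by
    conv_lhs => rw [pi_eq_sum_univ' x]
    simp [hc, dotProduct, ratToReal, mul_comm]
  obtain ⟨m, hm⟩ := hf v hvG
  refine ratToReal_dotProduct_ne_of_forall_rational hv (c := fun i => (c i : ℚ))
    (fun h => hf0 (LinearMap.ext fun x => ?_)) m ?_
  · have hc0 : ∀ i, c i = 0 := fun i => by simpa using congr_fun h i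
    simp [hfc, dotProduct, ratToReal, hc0]
  · simpa [← hfc] using hm

theorem denseRange_zsmul_toTorus {v : Fin n → ℝ}
    (hv : ∀ W : AffineSubspace ℝ (Fin n → ℝ), IsRationalAffineSubspace W → v ∈ W →
      (W : Set (Fin n → ℝ)) = Set.univ) :
    DenseRange fun k : ℤ => k • toTorus n v := by
  set π := toTorus n
  have hG : (AddSubgroup.zmultiples (π v)).topologicalClosure.comap π = ⊤ := by
    refine AddSubgroup.eq_top_of_isClosed_of_forall_single_mem hv
      ((AddSubgroup.isClosed_topologicalClosure _).preimage isOpenQuotientMap_toTorus.continuous)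
      (fun i => ?_) (AddSubgroup.le_topologicalClosure _ (AddSubgroup.mem_zmultiples _))
    have : π (Pi.single i 1) = 0 := toTorus_eq_zero_iff.2 ⟨Pi.single i 1, by
      ext j; by_cases h : j = i <;> simp [h]⟩
    simp [this]
  rw [DenseRange, ← AddSubgroup.coe_zmultiples]
  intro y
  obtain ⟨x, rfl⟩ := isOpenQuotientMap_toTorus.surjective y
  exact (hG ▸ trivial : x ∈ (AddSubgroup.zmultiples (π v)).topologicalClosure.comap π)

theorem setOf_natCast_smul_add_intCast_eq_preimage_toTorus (v : Fin n → ℝ) :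
    {x : Fin n → ℝ | ∃ (m : ℕ) (w : Fin n → ℤ), x = (m : ℝ) • v + fun i => ((w i : ℝ))} =
      toTorus n ⁻¹' Set.range fun k : ℕ => k • toTorus n v := by
  ext x
  simp only [Set.mem_ofPred_eq, Set.mem_preimage, Set.mem_range]
  refine exists_congr fun m => ?_
  rw [← map_nsmul, eq_comm, ← sub_eq_zero, ← map_sub, toTorus_eq_zero_iff,
    ← Nat.cast_smul_eq_nsmul ℝ]
  simp only [sub_eq_iff_eq_add']

end Torus

/-- **Kronecker-type density.** If `v ∈ ℝⁿ` is not contained in any proper rational affine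
subspace of `ℝⁿ`, then the set `{m • v + w : m ∈ ℕ, w ∈ ℤⁿ}` is dense in `ℝⁿ`. -/
theorem dense_natSMul_add_int_of_not_mem_rational_affine
    (n : ℕ) (v : Fin n → ℝ)
    (hv : ∀ W : AffineSubspace ℝ (Fin n → ℝ), IsRationalAffineSubspace W → v ∈ W →
      (W : Set (Fin n → ℝ)) = Set.univ) :
    Dense {x : Fin n → ℝ | ∃ (m : ℕ) (w : Fin n → ℤ),
      x = (m : ℝ) • v + fun i => ((w i : ℝ))} := by
  rw [setOf_natCast_smul_add_intCast_eq_preimage_toTorus]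
  -- the torus is compact, so the `ℕ`-multiples of a point are as dense as its `ℤ`-multiples
  exact isOpenQuotientMap_toTorus.dense_preimage_iff.2
    (denseRange_zsmul_iff_nsmul.1 (denseRange_zsmul_toTorus hv))
end

section
/- Let v ∈ ℝ^n, let X = {mv + w : m ∈ ℕ, w ∈ ℤ^n}, and let π : ℝ^n → ℝ^n/ℤ^n be the quotient map onto the torus. Then the closure of π(X) in ℝ^n/ℤ^n is a closed subgroup of ℝ^n/ℤ^n with finitely many connected components; consequently, the closure of X in ℝ^n is symmetric with respect to the origin, i.e. if x lies in the closure of X then so does −x. -/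
/-!
Since `X` is invariant under `ℤⁿ`, it is `π⁻¹` of the forward orbit `{m • π v}`. In a compact
group the multiples `l • π v` come back arbitrarily close to `0` for arbitrarily large `l`, so
the backward orbit lies in the closure of the forward one: `closure (π X)` is the closed
subgroup generated by `π v`. As `π` is open, `closure X = π⁻¹ (closure (π X))` is then a
subgroup of `ℝⁿ`, hence symmetric.

Every closed subgroup `G` of the torus has finitely many components. Its preimage `H` in `ℝⁿ`
agrees near `0` with its lineality space `V`: on a complement of `V`, `H` contains no line, and
a closed subgroup of `ℝⁿ` without lines is discrete (a sequence of nonzero elements tending to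
`0` would, after rescaling, produce a line). So the connected set `π V` is a neighbourhood of
`0` in `G`; the identity component of the compact group `G` is therefore open and has finitely
many cosets.
-/

open Filter Metric Set Topology

section CompactGroup

variable {G : Type*} [SeminormedAddCommGroup G] [CompactSpace G]

theorem frequently_norm_nsmul_lt (x : G) {ε : ℝ} (hε : 0 < ε) :
    ∃ᶠ l : ℕ in atTop, ‖l • x‖ < ε := by
  rw [frequently_atTop]
  intro N
  obtain ⟨y, -, φ, hφ, hlim⟩ :=
    isCompact_univ.tendsto_subseq (x := fun k : ℕ => k • x) fun _ => mem_univ _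
  obtain ⟨K, hK⟩ := Metric.tendsto_atTop.1 hlim (ε / 2) (half_pos hε)
  have hN : N + φ K ≤ φ (N + K) := hφ.add_le_nat N K
  refine ⟨φ (N + K) - φ K, by omega, ?_⟩
  calc ‖(φ (N + K) - φ K) • x‖ = dist (φ (N + K) • x) (φ K • x) := by
        rw [sub_nsmul x (by omega), dist_eq_norm, sub_eq_add_neg]
    _ ≤ dist (φ (N + K) • x) y + dist (φ K • x) y := dist_triangle_right _ _ _
    _ < ε / 2 + ε / 2 := add_lt_add (hK (N + K) (by omega)) (hK K le_rfl)
    _ = ε := add_halves ε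

theorem closure_range_nsmul_eq_topologicalClosure_zmultiples (x : G) :
    closure (range fun m : ℕ => m • x) = (AddSubgroup.zmultiples x).topologicalClosure := by
  rw [AddSubgroup.topologicalClosure_coe]
  refine (closure_mono ?_).antisymm (closure_minimal ?_ isClosed_closure)
  · rintro _ ⟨m, rfl⟩
    exact ⟨m, natCast_zsmul x m⟩
  · rintro _ ⟨m, rfl⟩
    obtain ⟨k, rfl | rfl⟩ := Int.eq_nat_or_neg m
    · exact subset_closure ⟨k, (natCast_zsmul x k).symm⟩
    · change -(k : ℤ) • x ∈ _
      rw [neg_zsmul, natCast_zsmul, Metric.mem_closure_iff]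
      intro ε hε
      obtain ⟨l, hkl, hl⟩ := frequently_atTop.1 (frequently_norm_nsmul_lt x hε) k
      refine ⟨(l - k) • x, ⟨l - k, rfl⟩, ?_⟩
      rwa [sub_nsmul x hkl, dist_eq_norm, ← norm_neg, neg_sub, add_sub_cancel_right]

end CompactGroup

theorem finite_connectedComponents_of_connectedComponent_mem_nhds {G : Type*}
    [TopologicalSpace G] [AddGroup G] [IsTopologicalAddGroup G] [CompactSpace G]
    (h : connectedComponent (0 : G) ∈ 𝓝 0) : Finite (ConnectedComponents G) := by
  have : DiscreteTopology (ConnectedComponents G) := by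
    refine ConnectedComponents.discreteTopology_iff.2 fun x => ?_
    rw [← add_zero x, ← vadd_connectedComponent]
    exact ((AddSubgroup.connectedComponentOfZero G).isOpen_of_mem_nhds h).vadd x
  exact finite_of_compact_of_discrete

theorem tendsto_floor_div_mul_self {α : Type*} {l : Filter α} {r : α → ℝ} (hr0 : ∀ a, 0 < r a)
    (hr : Tendsto r l (𝓝 0)) (t : ℝ) : Tendsto (fun a => (⌊t / r a⌋ : ℝ) * r a) l (𝓝 t) := by
  have hlow : Tendsto (fun a => t - r a) l (𝓝 t) := by simpa using tendsto_const_nhds.sub hr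
  refine tendsto_of_tendsto_of_tendsto_of_le_of_le hlow tendsto_const_nhds (fun a => ?_) fun a => ?_
  · calc t - r a = (t / r a - 1) * r a := by field_simp [(hr0 a).ne']
      _ ≤ _ := mul_le_mul_of_nonneg_right (Int.sub_one_lt_floor _).le (hr0 a).le
  · calc _ ≤ t / r a * r a := mul_le_mul_of_nonneg_right (Int.floor_le _) (hr0 a).le
      _ = t := div_mul_cancel₀ t (hr0 a).ne'

section Lineality

variable (𝕜 : Type*) {E : Type*} [Semiring 𝕜] [AddCommGroup E] [Module 𝕜 E]

/-- The lineality space of `H`: the largest `𝕜`-subspace of `E` contained in `H`. -/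
def AddSubgroup.lineality (H : AddSubgroup E) : Submodule 𝕜 E where
  carrier := {u | ∀ t : 𝕜, t • u ∈ H}
  add_mem' hu hv t := by
    rw [smul_add]
    exact H.add_mem (hu t) (hv t)
  zero_mem' t := by
    rw [smul_zero]
    exact H.zero_mem
  smul_mem' c u hu t := by
    rw [smul_smul]
    exact hu (t * c)

variable {𝕜}

theorem AddSubgroup.lineality_subset (H : AddSubgroup E) : (H.lineality 𝕜 : Set E) ⊆ H :=
  fun u hu => by simpa using hu 1

end Lineality

section ClosedSubgroup

variable {E : Type*} [NormedAddCommGroup E] [NormedSpace ℝ E]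

theorem AddSubgroup.eventually_eq_zero_of_lineality_eq_bot [ProperSpace E] {H : AddSubgroup E}
    (hH : IsClosed (H : Set E)) (h : H.lineality ℝ = ⊥) : ∀ᶠ x in 𝓝 (0 : E), x ∈ H → x = 0 := by
  rw [Metric.eventually_nhds_iff]
  by_contra! hnd
  choose d hd_lt hdH hd0 using fun k : ℕ => hnd (1 / (k + 1)) Nat.one_div_pos_of_nat
  have hr0 : ∀ k, 0 < ‖d k‖ := fun k => norm_pos_iff.2 (hd0 k)
  have hr : Tendsto (fun k => ‖d k‖) atTop (𝓝 0) :=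
    squeeze_zero (fun k => norm_nonneg _) (fun k => by simpa using (hd_lt k).le)
      tendsto_one_div_add_atTop_nhds_zero_nat
  obtain ⟨u, hu, φ, hφ, hlim⟩ := (isCompact_sphere (0 : E) 1).tendsto_subseq
    (x := fun k => ‖d k‖⁻¹ • d k) fun k => by simp [norm_smul, (hr0 k).ne']
  -- `⌊t / ‖d‖⌋ • d ∈ H` approximates `t • u`
  have hu_mem : u ∈ H.lineality ℝ := fun t => by
    refine hH.mem_of_tendsto
      (((tendsto_floor_div_mul_self hr0 hr t).comp hφ.tendsto_atTop).smul hlim)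
      (Eventually.of_forall fun k => ?_)
    simp only [Function.comp_apply, smul_smul, mul_assoc, mul_inv_cancel₀ (hr0 _).ne', mul_one,
      Int.cast_smul_eq_zsmul]
    exact H.zsmul_mem (hdH _) _
  rw [h, Submodule.mem_bot] at hu_mem
  simp [hu_mem] at hu

theorem AddSubgroup.eventually_mem_lineality [FiniteDimensional ℝ E] {H : AddSubgroup E}
    (hH : IsClosed (H : Set E)) : ∀ᶠ x in 𝓝 (0 : E), x ∈ H → x ∈ H.lineality ℝ := by
  set V := H.lineality ℝ
  obtain ⟨f, hf⟩ := Submodule.ClosedComplemented.of_finiteDimensional V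
  let K := H ⊓ (f : E →ₗ[ℝ] V).ker.toAddSubgroup
  have hK : K.lineality ℝ = ⊥ := by
    refine (Submodule.eq_bot_iff _).2 fun u hu => ?_
    have huV : u ∈ V := fun t => (hu t).1
    have hfu : f u = 0 := by simpa using (hu 1).2
    simpa [hfu, eq_comm] using congrArg Subtype.val (hf ⟨u, huV⟩)
  have hKd := AddSubgroup.eventually_eq_zero_of_lineality_eq_bot
    (hH.inter (ContinuousLinearMap.isClosed_ker f)) hK
  let q : E →L[ℝ] E := ContinuousLinearMap.id ℝ E - V.subtypeL.comp f
  have hq : Tendsto q (𝓝 0) (𝓝 0) := by simpa using q.continuous.tendsto 0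
  filter_upwards [hq.eventually hKd] with x hx hxH
  have hqK : q x ∈ K := by
    refine ⟨H.sub_mem hxH (H.lineality_subset (f x).2), ?_⟩
    simp [q, hf]
  have hxf : x - f x = 0 := hx hqK
  rw [sub_eq_zero.1 hxf]
  exact (f x).2

end ClosedSubgroup

section Torus

variable {ι : Type*}

def torusMk : (ι → ℝ) →+ (ι → UnitAddCircle) :=
  AddMonoidHom.compLeft (QuotientAddGroup.mk' _) ι

@[simp]
theorem torusMk_apply (x : ι → ℝ) (i : ι) : torusMk x i = (x i : UnitAddCircle) :=
  rfl

theorem continuous_torusMk : Continuous (torusMk (ι := ι)) :=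
  continuous_pi fun i => continuous_quotient_mk'.comp (continuous_apply i)

theorem isOpenMap_torusMk : IsOpenMap (torusMk (ι := ι)) :=
  IsOpenMap.piMap (fun _ => QuotientAddGroup.isOpenMap_coe)
    (Eventually.of_forall fun _ => QuotientAddGroup.mk_surjective)

theorem torusMk_surjective : Function.Surjective (torusMk (ι := ι)) := fun g =>
  ⟨fun i => (QuotientAddGroup.mk_surjective (g i)).choose,
    funext fun i => (QuotientAddGroup.mk_surjective (g i)).choose_spec⟩

theorem torusMk_eq_zero_iff {x : ι → ℝ} :
    torusMk x = 0 ↔ ∃ w : ι → ℤ, (fun i => (w i : ℝ)) = x := by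
  simp only [funext_iff, Pi.zero_apply, torusMk_apply, AddCircle.coe_eq_zero_iff, zsmul_one]
  exact Classical.skolem

theorem exists_torusMk_eq_norm_le [Fintype ι] (g : ι → UnitAddCircle) :
    ∃ x, torusMk x = g ∧ ‖x‖ ≤ ‖g‖ := by
  choose y hy using fun i => QuotientAddGroup.mk_surjective (g i)
  refine ⟨fun i => y i - round (y i), funext fun i => ?_,
    (pi_norm_le_iff_of_nonneg (norm_nonneg g)).2 fun i => ?_⟩
  · rw [torusMk_apply, ← hy i]
    simp
  · rw [Real.norm_eq_abs, ← UnitAddCircle.norm_eq]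
    exact (congrArg norm (hy i)).trans_le (norm_le_pi_norm g i)

theorem preimage_torusMk_range_nsmul (v : ι → ℝ) :
    torusMk ⁻¹' range (fun m : ℕ => m • torusMk v) =
      {x | ∃ (m : ℕ) (w : ι → ℤ), x = (m : ℝ) • v + fun i => (w i : ℝ)} := by
  ext x
  simp only [mem_preimage, mem_range]
  constructor
  · rintro ⟨m, hm⟩
    obtain ⟨w, hw⟩ := torusMk_eq_zero_iff.1 (show torusMk (x - (m : ℝ) • v) = 0 by
      rw [map_sub, Nat.cast_smul_eq_nsmul, map_nsmul, hm, sub_self])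
    exact ⟨m, w, by rw [hw, add_sub_cancel]⟩
  · rintro ⟨m, w, rfl⟩
    refine ⟨m, ?_⟩
    rw [map_add, torusMk_eq_zero_iff.2 ⟨w, rfl⟩, add_zero, Nat.cast_smul_eq_nsmul, map_nsmul]

theorem AddSubgroup.finite_connectedComponents_of_isClosed [Fintype ι]
    {G : AddSubgroup (ι → UnitAddCircle)} (hG : IsClosed (G : Set (ι → UnitAddCircle))) :
    Finite (ConnectedComponents G) := by
  have : CompactSpace G := isCompact_iff_compactSpace.1 hG.isCompact
  apply finite_connectedComponents_of_connectedComponent_mem_nhds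
  set V := (G.comap torusMk).lineality ℝ
  have hVG : torusMk '' V ⊆ (G : Set (ι → UnitAddCircle)) := by
    rintro _ ⟨v, hv, rfl⟩
    exact (G.comap torusMk).lineality_subset hv
  have hsmall : ∀ᶠ g in 𝓝 (0 : ι → UnitAddCircle), g ∈ G → g ∈ torusMk '' V := by
    obtain ⟨ε, hε, hV⟩ := Metric.eventually_nhds_iff.1
      ((G.comap torusMk).eventually_mem_lineality (hG.preimage continuous_torusMk))
    filter_upwards [ball_mem_nhds 0 hε] with g hg hgG
    obtain ⟨x, rfl, hx⟩ := exists_torusMk_eq_norm_le g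
    exact ⟨x, hV (by simpa using hx.trans_lt (mem_ball_zero_iff.1 hg)) hgG, rfl⟩
  have hconn : IsPreconnected
      (Subtype.val ⁻¹' (torusMk '' V) : Set (G : Set (ι → UnitAddCircle))) := by
    rw [← Topology.IsInducing.subtypeVal.isPreconnected_image, Subtype.image_preimage_val,
      inter_eq_right.2 hVG]
    exact V.convex.isPreconnected.image _ continuous_torusMk.continuousOn
  refine mem_of_superset ?_ (hconn.subset_connectedComponent ⟨0, V.zero_mem, map_zero _⟩)
  exact ((continuous_subtype_val.tendsto 0).eventually hsmall).mono fun g hg => hg g.2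

end Torus

/-- **Structure of the closure of an orbit on the torus.** Let `v ∈ ℝⁿ`, let
`X = {m • v + w : m ∈ ℕ, w ∈ ℤⁿ}`, and let `π : ℝⁿ → ℝⁿ/ℤⁿ` be the quotient map onto the
torus. Then the closure of `π(X)` is a closed subgroup of the torus with finitely many
connected components; consequently, the closure of `X` in `ℝⁿ` is symmetric with respect
to the origin. -/
theorem closure_orbit_subgroup_finite_components
    (n : ℕ) (v : Fin n → ℝ)
    (X : Set (Fin n → ℝ))
    (hX : X = {x | ∃ (m : ℕ) (w : Fin n → ℤ), x = (m : ℝ) • v + fun i => ((w i : ℝ))})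
    (π : (Fin n → ℝ) → (Fin n → AddCircle (1 : ℝ)))
    (hπ : π = fun x i => ((x i : ℝ) : AddCircle (1 : ℝ))) :
    (∃ G : AddSubgroup (Fin n → AddCircle (1 : ℝ)),
      IsClosed (G : Set (Fin n → AddCircle (1 : ℝ))) ∧
      (G : Set (Fin n → AddCircle (1 : ℝ))) = closure (π '' X)) ∧
    Finite (ConnectedComponents (closure (π '' X))) ∧
    (∀ x ∈ closure X, -x ∈ closure X) := by
  replace hπ : π = torusMk := hπ
  rw [← preimage_torusMk_range_nsmul] at hX
  subst hX hπ
  set H := AddSubgroup.zmultiples (torusMk v)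
  have hG : (H.topologicalClosure : Set (Fin n → UnitAddCircle)) =
      closure (torusMk '' (torusMk ⁻¹' range fun m : ℕ => m • torusMk v)) := by
    rw [image_preimage_eq _ torusMk_surjective,
      closure_range_nsmul_eq_topologicalClosure_zmultiples]
  refine ⟨⟨H.topologicalClosure, H.isClosed_topologicalClosure, hG⟩,
    hG ▸ AddSubgroup.finite_connectedComponents_of_isClosed H.isClosed_topologicalClosure,
    fun x hx => ?_⟩
  rw [← isOpenMap_torusMk.preimage_closure_eq_closure_preimage continuous_torusMk,
    closure_range_nsmul_eq_topologicalClosure_zmultiples] at hx ⊢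
  rw [mem_preimage, map_neg]
  exact H.topologicalClosure.neg_mem hx
end

section
/- Let x ∈ ℝ^n, y ∈ ℚ^n, let ε > 0 and let k, k' be positive integers with k'y/k ∈ ℤ^n and ‖x − y‖ < ε/k', where ‖·‖ is the sup-norm. If 2ε ≤ k, then for all coordinate indices p, q: x_p = x_q implies y_p = y_q. If moreover 2ε < k'(x_p − x_q) for all indices p, q with x_p > x_q, then x_p > x_q implies y_p > y_q. -/
theorem abs_sub_sub_sub_le_two_mul_norm {ι : Type*} [Fintype ι] (u v : ι → ℝ) (p q : ι) :
    |(u p - u q) - (v p - v q)| ≤ 2 * ‖u - v‖ := by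
  have coord (j : ι) : |u j - v j| ≤ ‖u - v‖ := norm_le_pi_norm (u - v) j
  calc |(u p - u q) - (v p - v q)| = |(u p - v p) - (u q - v q)| := by ring_nf
    _ ≤ |u p - v p| + |u q - v q| := abs_sub _ _
    _ ≤ 2 * ‖u - v‖ := by linarith [coord p, coord q]

theorem Int.eq_zero_of_abs_mul_lt {F : Type*} [Field F] [LinearOrder F] [IsStrictOrderedRing F]
    {k : F} (hk : 0 ≤ k) {z : ℤ} (h : |k * z| < k) : z = 0 := by
  by_contra hz
  have : (1 : F) ≤ |(z : F)| := by exact_mod_cast Int.one_le_abs hz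
  rw [abs_mul, abs_of_nonneg hk] at h
  nlinarith

theorem eq_of_mul_eq_intCast_mul_of_abs_lt {F : Type*} [Field F] [LinearOrder F]
    [IsStrictOrderedRing F] {k k' a b : F} (hk : 0 ≤ k) (hk' : k' ≠ 0) {za zb : ℤ}
    (ha : k' * a = k * za) (hb : k' * b = k * zb) (h : |k' * (a - b)| < k) : a = b := by
  have hdiff : k' * (a - b) = k * ((za - zb : ℤ) : F) := by push_cast; rw [mul_sub, ha, hb, mul_sub]
  rw [hdiff] at h
  have hz : za = zb := sub_eq_zero.mp (Int.eq_zero_of_abs_mul_lt hk h)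
  exact mul_left_cancel₀ hk' (by rw [ha, hb, hz])

theorem approximant_preserves_coordinate_order_general
    (n : ℕ) (x : Fin n → ℝ) (y : Fin n → ℚ) (ε : ℝ)
    (k k' : ℕ) (hk' : 0 < k')
    (hint : ∀ j, ∃ z : ℤ, (k' : ℚ) * y j = (k : ℚ) * z)
    (hnorm : ‖x - ratToReal y‖ < ε / k')
    (h2ε : 2 * ε ≤ (k : ℝ)) :
    (∀ p q : Fin n, x p = x q → y p = y q) ∧
    ((∀ p q : Fin n, x q < x p → 2 * ε < (k' : ℝ) * (x p - x q)) →
      ∀ p q : Fin n, x q < x p → y q < y p) := by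
  have hk'R : (0 : ℝ) < k' := by exact_mod_cast hk'
  have hdist : k' * ‖x - ratToReal y‖ < ε := by rwa [lt_div_iff₀ hk'R, mul_comm] at hnorm
  have hscaled (p q : Fin n) :
      |k' * (x p - x q) - k' * ((y p : ℝ) - y q)| < 2 * ε := by
    rw [← mul_sub, abs_mul, abs_of_pos hk'R]
    calc (k' : ℝ) * |(x p - x q) - ((y p : ℝ) - y q)| ≤ k' * (2 * ‖x - ratToReal y‖) :=
          mul_le_mul_of_nonneg_left (abs_sub_sub_sub_le_two_mul_norm x (ratToReal y) p q) hk'R.le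
      _ < 2 * ε := by linarith
  refine ⟨fun p q hpq => ?_, fun hsep p q hlt => ?_⟩
  · obtain ⟨zp, hzp⟩ := hint p
    obtain ⟨zq, hzq⟩ := hint q
    have hclose : |(k' : ℝ) * ((y p : ℝ) - y q)| < k := by
      simpa [hpq, abs_sub_comm] using (hscaled p q).trans_le h2ε
    refine eq_of_mul_eq_intCast_mul_of_abs_lt (k := (k : ℚ)) (by positivity) (by positivity)
      hzp hzq ?_
    exact_mod_cast hclose
  · have hgap := abs_lt.mp (hscaled p q)
    have hpos : (0 : ℝ) < k' * ((y p : ℝ) - y q) := by linarith [hsep p q hlt]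
    exact_mod_cast sub_pos.mp (pos_of_mul_pos_right hpos hk'R.le)

/-- **Good approximants preserve coordinate equalities and strict inequalities.**
Let `x ∈ ℝⁿ`, `y ∈ ℚⁿ`, `ε > 0` and `k, k' ∈ ℤ_{>0}` with `k'y/k ∈ ℤⁿ` and
`‖x − y‖ < ε/k'` in the sup-norm. If `2ε ≤ k`, then `x_p = x_q` implies `y_p = y_q`; if
moreover `2ε < k'(x_p − x_q)` whenever `x_p > x_q`, then `x_p > x_q` implies
`y_p > y_q`. -/
theorem approximant_preserves_coordinate_order
    (n : ℕ) (x : Fin n → ℝ) (y : Fin n → ℚ) (ε : ℝ) (hε : 0 < ε)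
    (k k' : ℕ) (hk : 0 < k) (hk' : 0 < k')
    (hint : ∀ j, ∃ z : ℤ, (k' : ℚ) * y j = (k : ℚ) * z)
    (hnorm : ‖x - ratToReal y‖ < ε / k')
    (h2ε : 2 * ε ≤ (k : ℝ)) :
    (∀ p q : Fin n, x p = x q → y p = y q) ∧
    ((∀ p q : Fin n, x q < x p → 2 * ε < (k' : ℝ) * (x p - x q)) →
      ∀ p q : Fin n, x q < x p → y q < y p) :=
  approximant_preserves_coordinate_order_general n x y ε k k' hk' hint hnorm h2ε
end

section
/- Let D ⊆ ℝ^ℓ be a closed cone (a topologically closed set containing 0 with λd ∈ D for all λ ≥ 0 and d ∈ D), let z₁, …, z_k ∈ ℝ^ℓ \ D be linearly independent points, and set Z = ℝ₊z₁ + … + ℝ₊z_k and C = Z + D. Let (x_m)_{m∈ℕ} be a sequence in C converging to x_∞ = Σᵢ αᵢzᵢ with αᵢ > 0 for all i, and with x_m ≠ x_∞ for all m. Assume that whenever x_∞ = z + d with z ∈ Z and d ∈ D, then d = 0 (in particular x_∞ ∉ D). Then for every m₀ ∈ ℕ there exist m ≥ m₀ and x'_m ∈ C such that x_m lies on the open segment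 (x_∞, x'_m). -/
/-!
Write `x m = ∑ c m i • z i + d m` with `c m ≥ 0` and `d m ∈ D`. It suffices that eventually all
coefficients `c m i` are positive: then `c m ≥ t • α` for some `t ∈ (0, 1)`, so
`x m - t • x_∞ ∈ (1 - t) • C` and `x' = (1 - t)⁻¹ • (x m - t • x_∞)` works.

For the positivity, rescale `(1, c m)` into the standard simplex and pass to a limit `(s, u)`
along a subsequence. Closedness of `D` gives `s • x_∞ - ∑ u i • z i ∈ D`; adding
`x_∞ + ∑ u i • z i` to both sides yields a decomposition of `(1 + s) • x_∞`, so the hypothesis on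
decompositions of `x_∞` and linear independence force `u = s • α`. As `s + ∑ u i = 1`, `s > 0`
and every `u i > 0`, which rules out a subsequence along which some `c m i` vanishes.
-/

open Filter Topology

section

variable {ι E : Type*} [Fintype ι] [AddCommGroup E] [Module ℝ E]

noncomputable def homogenize (c : ι → ℝ) : Option ι → ℝ :=
  (1 + ∑ i, c i)⁻¹ • fun o => o.elim 1 c

theorem homogenize_none (c : ι → ℝ) : homogenize c none = (1 + ∑ i, c i)⁻¹ := by
  simp [homogenize]

theorem homogenize_some (c : ι → ℝ) (i : ι) :
    homogenize c (some i) = homogenize c none * c i := by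
  simp [homogenize]

theorem homogenize_mem_stdSimplex {c : ι → ℝ} (hc : ∀ i, 0 ≤ c i) :
    homogenize c ∈ stdSimplex ℝ (Option ι) := by
  have hpos : 0 < 1 + ∑ i, c i := by linarith [Finset.sum_nonneg' (s := Finset.univ) hc]
  have hnone : 0 ≤ homogenize c none := (homogenize_none c).symm ▸ inv_nonneg.2 hpos.le
  refine ⟨fun o => ?_, ?_⟩
  · cases o with
    | none => exact hnone
    | some i => exact (homogenize_some c i).symm ▸ mul_nonneg hnone (hc i)
  · simp only [Fintype.sum_option, homogenize_none, homogenize_some, ← Finset.mul_sum]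
    field_simp

theorem homogenize_smul_sub_sum_smul (c : ι → ℝ) (x : E) (z : ι → E) :
    homogenize c none • x - ∑ i, homogenize c (some i) • z i =
      homogenize c none • (x - ∑ i, c i • z i) := by
  simp only [homogenize_none, homogenize_some, smul_sub, Finset.smul_sum, smul_smul]

variable {D : Set E}

theorem smul_eq_of_smul_sub_sum_smul_mem (hDcone : ∀ d ∈ D, ∀ a : ℝ, 0 ≤ a → a • d ∈ D)
    {z : ι → E} (hz : LinearIndependent ℝ z) {α : ι → ℝ} (hα : ∀ i, 0 ≤ α i)
    (hdecomp : ∀ a : ι → ℝ, (∀ i, 0 ≤ a i) → ∀ d ∈ D,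
      ∑ i, α i • z i = ∑ i, a i • z i + d → d = 0)
    {s : ℝ} (hs : 0 ≤ s) {u : ι → ℝ} (hu : ∀ i, 0 ≤ u i)
    (hD : s • ∑ i, α i • z i - ∑ i, u i • z i ∈ D) : u = s • α := by
  set w := s • ∑ i, α i • z i - ∑ i, u i • z i
  have hs1 : 0 < 1 + s := by linarith
  have hw : (1 + s)⁻¹ • w = 0 := by
    refine hdecomp (fun i => (1 + s)⁻¹ * (α i + u i))
      (fun i => mul_nonneg (inv_nonneg.2 hs1.le) (add_nonneg (hα i) (hu i))) _
      (hDcone _ hD _ (inv_nonneg.2 hs1.le)) ?_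
    simp only [← smul_smul, ← Finset.smul_sum, ← smul_add, add_smul, Finset.sum_add_distrib, w]
    rw [eq_inv_smul_iff₀ hs1.ne', add_smul, one_smul]
    abel
  have hw0 : w = 0 := (smul_eq_zero.1 hw).resolve_left (inv_pos.2 hs1).ne'
  funext i
  refine Fintype.linearIndependent_iffₛ.1 hz _ _ ?_ i
  simp only [Pi.smul_apply, smul_eq_mul, ← smul_smul, ← Finset.smul_sum]
  exact (sub_eq_zero.1 hw0).symm

theorem eventually_forall_pos_of_tendsto [TopologicalSpace E] [IsTopologicalAddGroup E]
    [ContinuousSMul ℝ E] (hDclosed : IsClosed D) (hDcone : ∀ d ∈ D, ∀ a : ℝ, 0 ≤ a → a • d ∈ D)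
    {z : ι → E} {α : ι → ℝ} (hα : ∀ i, 0 < α i) {xlim : E}
    (hcoeff : ∀ s : ℝ, 0 ≤ s → ∀ u : ι → ℝ, (∀ i, 0 ≤ u i) →
      s • xlim - ∑ i, u i • z i ∈ D → u = s • α)
    {x : ℕ → E} (hx : Tendsto x atTop (𝓝 xlim)) {c : ℕ → ι → ℝ} (hc : ∀ m i, 0 ≤ c m i)
    (hxD : ∀ m, x m - ∑ i, c m i • z i ∈ D) :
    ∀ᶠ m in atTop, ∀ i, 0 < c m i := by
  refine eventually_all.2 fun i₀ => ?_
  by_contra h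
  obtain ⟨φ, hφ, hφi₀⟩ := extraction_of_frequently_atTop (not_eventually.1 h)
  obtain ⟨q, hq, ψ, hψ, hlim⟩ := (isCompact_stdSimplex ℝ (Option ι)).tendsto_subseq
    fun j => homogenize_mem_stdSimplex (hc (φ j))
  set m := φ ∘ ψ
  have hlim' (o : Option ι) : Tendsto (fun j => homogenize (c (m j)) o) atTop (𝓝 (q o)) :=
    tendsto_pi_nhds.1 hlim o
  have hqD : q none • xlim - ∑ i, q (some i) • z i ∈ D := by
    refine hDclosed.mem_of_tendsto (((hlim' none).smul (hx.comp (hφ.comp hψ).tendsto_atTop)).sub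
      (tendsto_finsetSum _ fun i _ => (hlim' (some i)).smul_const (z i))) (.of_forall fun j => ?_)
    rw [Function.comp_apply, homogenize_smul_sub_sum_smul]
    exact hDcone _ (hxD _) _ ((homogenize_mem_stdSimplex (hc _)).1 none)
  have hqα : ∀ i, q (some i) = q none * α i := fun i =>
    congrFun (hcoeff _ (hq.1 none) _ (fun i => hq.1 (some i)) hqD) i
  have hqi₀ : q (some i₀) ≤ 0 := by
    refine le_of_tendsto' (hlim' (some i₀)) fun j => ?_
    rw [homogenize_some]
    exact mul_nonpos_of_nonneg_of_nonpos ((homogenize_mem_stdSimplex (hc _)).1 none)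
      (not_lt.1 (hφi₀ _))
  have hq0 : q none = 0 := by nlinarith [hq.1 none, hqα i₀, hα i₀]
  have := hq.2
  simp [Fintype.sum_option, hqα, hq0] at this

theorem exists_pos_lt_one_forall_mul_le (α : ι → ℝ) {c : ι → ℝ} (hc : ∀ i, 0 < c i) :
    ∃ t : ℝ, 0 < t ∧ t < 1 ∧ ∀ i, t * α i ≤ c i := by
  have hsmall : ∀ᶠ t in 𝓝[>] (0 : ℝ), ∀ i, t * α i ≤ c i := eventually_all.2 fun i =>
    nhdsWithin_le_nhds <| ((continuous_mul_const (α i)).tendsto' 0 0 (zero_mul _)).eventually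
      (eventually_le_nhds (hc i))
  obtain ⟨t, ⟨ht0, ht1⟩, ht⟩ := (Eventually.and (Ioo_mem_nhdsGT one_pos) hsmall).exists
  exact ⟨t, ht0, ht1, ht⟩

theorem exists_convexComb_eq_of_forall_pos (hDcone : ∀ d ∈ D, ∀ a : ℝ, 0 ≤ a → a • d ∈ D)
    (z : ι → E) (α : ι → ℝ) {c : ι → ℝ} (hc : ∀ i, 0 < c i) {d : E} (hd : d ∈ D) :
    ∃ c' : ι → ℝ, (∀ i, 0 ≤ c' i) ∧ ∃ d' ∈ D, ∃ t : ℝ, 0 < t ∧ t < 1 ∧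
      ∑ i, c i • z i + d = t • ∑ i, α i • z i + (1 - t) • (∑ i, c' i • z i + d') := by
  obtain ⟨t, ht0, ht1, htc⟩ := exists_pos_lt_one_forall_mul_le α hc
  have ht : 0 < 1 - t := sub_pos.2 ht1
  refine ⟨fun i => (1 - t)⁻¹ * (c i - t * α i), fun i => ?_, (1 - t)⁻¹ • d,
    hDcone d hd _ (inv_nonneg.2 ht.le), t, ht0, ht1, ?_⟩
  · exact mul_nonneg (inv_nonneg.2 ht.le) (sub_nonneg.2 (htc i))
  · have hscale : (1 - t) • (∑ i, ((1 - t)⁻¹ * (c i - t * α i)) • z i + (1 - t)⁻¹ • d) =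
        ∑ i, (c i - t * α i) • z i + d := by
      simp only [← smul_smul, ← Finset.smul_sum, ← smul_add]
      exact smul_inv_smul₀ ht.ne' _
    rw [hscale]
    simp only [sub_smul, Finset.sum_sub_distrib, Finset.smul_sum, smul_smul]
    abel

end

theorem exists_point_on_open_segment_of_tendsto_general
    (l : ℕ) (D : Set (Fin l → ℝ))
    (hDclosed : IsClosed D)
    (hDcone : ∀ d ∈ D, ∀ a : ℝ, 0 ≤ a → a • d ∈ D)
    (k : ℕ) (z : Fin k → Fin l → ℝ)
    (hzli : LinearIndependent ℝ z)
    (Z C : Set (Fin l → ℝ))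
    (hZ : Z = {x | ∃ c : Fin k → ℝ, (∀ i, 0 ≤ c i) ∧ x = ∑ i, c i • z i})
    (hCdef : C = {x | ∃ u ∈ Z, ∃ d ∈ D, x = u + d})
    (x : ℕ → Fin l → ℝ) (hxC : ∀ m, x m ∈ C)
    (α : Fin k → ℝ) (hα : ∀ i, 0 < α i)
    (xlim : Fin l → ℝ) (hxlim : xlim = ∑ i, α i • z i)
    (htendsto : Filter.Tendsto x Filter.atTop (nhds xlim))
    (hdecomp : ∀ u ∈ Z, ∀ d ∈ D, xlim = u + d → d = 0) :
    ∀ m₀ : ℕ, ∃ m ≥ m₀, ∃ x' ∈ C, ∃ t : ℝ, 0 < t ∧ t < 1 ∧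
      x m = t • xlim + (1 - t) • x' := by
  intro m₀
  subst hZ hCdef hxlim
  have hdec (m : ℕ) : ∃ c : Fin k → ℝ, (∀ i, 0 ≤ c i) ∧ x m - ∑ i, c i • z i ∈ D := by
    obtain ⟨_, ⟨c, hc, rfl⟩, d, hd, hxm⟩ := hxC m
    exact ⟨c, hc, by rwa [hxm, add_sub_cancel_left]⟩
  choose c hc hcD using hdec
  have hcoeff := fun s (hs : 0 ≤ s) (u : Fin k → ℝ) (hu : ∀ i, 0 ≤ u i) =>
    smul_eq_of_smul_sub_sum_smul_mem hDcone hzli (fun i => (hα i).le)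
      (fun a ha d hd => hdecomp _ ⟨a, ha, rfl⟩ d hd) hs hu
  obtain ⟨m, hm, hpos⟩ := ((eventually_ge_atTop m₀).and
    (eventually_forall_pos_of_tendsto hDclosed hDcone hα hcoeff htendsto hc hcD)).exists
  obtain ⟨c', hc', d', hd', t, ht0, ht1, hxm⟩ :=
    exists_convexComb_eq_of_forall_pos hDcone z α hpos (hcD m)
  refine ⟨m, hm, _, ⟨_, ⟨c', hc', rfl⟩, d', hd', rfl⟩, t, ht0, ht1, ?_⟩
  rwa [add_sub_cancel] at hxm

/-- **Points of a sequence in a cone `Z + D` approaching an interior point of `Z` lie on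
segments from the limit.** Let `D ⊆ ℝˡ` be a closed cone, let `z₁, …, z_k ∈ ℝˡ \ D` be
linearly independent, `Z = ℝ₊z₁ + … + ℝ₊z_k` and `C = Z + D`. Let `xₘ ∈ C` converge to
`x_∞ = Σᵢ αᵢzᵢ` with all `αᵢ > 0` and `xₘ ≠ x_∞`. Assume that whenever `x_∞ = z + d` with
`z ∈ Z`, `d ∈ D`, then `d = 0`. Then for every `m₀` there exist `m ≥ m₀` and `x'ₘ ∈ C`
such that `xₘ` lies on the open segment `(x_∞, x'ₘ)`. -/
theorem exists_point_on_open_segment_of_tendsto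
    (l : ℕ) (D : Set (Fin l → ℝ))
    (hDclosed : IsClosed D) (hD0 : (0 : Fin l → ℝ) ∈ D)
    (hDcone : ∀ d ∈ D, ∀ a : ℝ, 0 ≤ a → a • d ∈ D)
    (k : ℕ) (z : Fin k → Fin l → ℝ)
    (hzD : ∀ i, z i ∉ D) (hzli : LinearIndependent ℝ z)
    (Z C : Set (Fin l → ℝ))
    (hZ : Z = {x | ∃ c : Fin k → ℝ, (∀ i, 0 ≤ c i) ∧ x = ∑ i, c i • z i})
    (hCdef : C = {x | ∃ u ∈ Z, ∃ d ∈ D, x = u + d})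
    (x : ℕ → Fin l → ℝ) (hxC : ∀ m, x m ∈ C)
    (α : Fin k → ℝ) (hα : ∀ i, 0 < α i)
    (xlim : Fin l → ℝ) (hxlim : xlim = ∑ i, α i • z i)
    (htendsto : Filter.Tendsto x Filter.atTop (nhds xlim))
    (hne : ∀ m, x m ≠ xlim)
    (hdecomp : ∀ u ∈ Z, ∀ d ∈ D, xlim = u + d → d = 0) :
    ∀ m₀ : ℕ, ∃ m ≥ m₀, ∃ x' ∈ C, ∃ t : ℝ, 0 < t ∧ t < 1 ∧
      x m = t • xlim + (1 - t) • x' :=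
  exists_point_on_open_segment_of_tendsto_general l D hDclosed hDcone k z hzli Z C hZ hCdef x hxC α
    hα xlim hxlim htendsto hdecomp
end

section
/- Let W₁, …, W_k be closed half-spaces of ℝ^ℓ bounded by affine hyperplanes H₁, …, H_k, and let Q = W₁ ∩ … ∩ W_k. Fix z ∈ ℝ^ℓ and let (x_m)_{m∈ℕ} be a sequence of points of ℝ^ℓ \ Q converging to a point x_∞ with x_∞ ∈ H_i for all i. Assume that for each m ∈ ℕ ∪ {∞} there exists a point y_m ∈ (x_m + ℝ₋z) ∩ ∂Q at minimal distance from x_m, where ℝ₋ denotes the set of nonpositive real numbers and ∂Q is the topological boundary of Q. Then some subsequence of (y_m)_{m∈ℕ} converges to x_∞. -/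
/-!
Write `Q = {p | ∀ i, ψᵢ p ≤ dᵢ}` and let `y = x + t z` (`t ≤ 0`) be a nearest point of
`(x + ℝ₋z) ∩ ∂Q` to `x ∉ Q`. Since `y ∈ Q`, going back from `x` along `-z` by
`R = ∑ᵢ |dᵢ - ψᵢ x| / |ψᵢ z|` lands in `Q` unless `y` is already closer than that: constraints
with `ψᵢ z > 0` are restored after a step `|dᵢ - ψᵢ x| / ψᵢ z ≤ R`, and those with `ψᵢ z ≤ 0`
hold at `x - R z` because they hold at `y`. The segment from that point of `Q` to `x ∉ Q` meets
`∂Q`, so `dist x y ≤ R ‖z‖`. When `x → x∞` with `ψᵢ x∞ = dᵢ` for all `i`, the bound `R` tends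
to `0`, so the whole sequence of nearest points converges to `x∞`.
-/

open Filter Topology

def IsNearestIn {M : Type*} [PseudoMetricSpace M] (S : Set M) (x y : M) : Prop :=
  y ∈ S ∧ ∀ w ∈ S, dist x y ≤ dist x w

variable {E : Type*} [NormedAddCommGroup E] [NormedSpace ℝ E]

def backwardRay (x z : E) : Set E := {p | ∃ t : ℝ, t ≤ 0 ∧ p = x + t • z}

lemma dist_self_add_smul_of_nonpos (x z : E) {t : ℝ} (ht : t ≤ 0) :
    dist x (x + t • z) = -t * ‖z‖ := by
  rw [dist_self_add_right, norm_smul, Real.norm_of_nonpos ht]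

lemma exists_mem_backwardRay_inter_frontier {Q : Set E} {x z : E} (hx : x ∉ Q) {s : ℝ}
    (hs : s ≤ 0) (hsQ : x + s • z ∈ Q) :
    ∃ w ∈ backwardRay x z ∩ frontier Q, dist x w ≤ -s * ‖z‖ := by
  have : PreconnectedSpace (Set.Icc s 0) :=
    isPreconnected_iff_preconnectedSpace.mp isPreconnected_Icc
  let g : Set.Icc s 0 → E := fun τ => x + (τ : ℝ) • z
  have hg : Continuous g := by fun_prop
  have hfront : (frontier (g ⁻¹' Q)).Nonempty := by
    refine nonempty_frontier_iff.mpr ⟨⟨⟨s, le_rfl, hs⟩, hsQ⟩, fun huniv => hx ?_⟩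
    simpa [g] using huniv.ge (Set.mem_univ (⟨0, hs, le_rfl⟩ : Set.Icc s 0))
  obtain ⟨⟨τ, hsτ, hτ0⟩, hτ⟩ := hfront
  refine ⟨g ⟨τ, hsτ, hτ0⟩, ⟨⟨τ, hτ0, rfl⟩, hg.frontier_preimage_subset Q hτ⟩, ?_⟩
  calc dist x (x + τ • z) = -τ * ‖z‖ := dist_self_add_smul_of_nonpos x z hτ0
    _ ≤ -s * ‖z‖ := by gcongr

lemma apply_add_smul_le_of_div_le {V F : Type*} [AddCommGroup V] [Module ℝ V] [FunLike F V ℝ]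
    [LinearMapClass F ℝ V ℝ] {ψ : F} {d t s : ℝ} {x z : V} (hts : t ≤ s)
    (ht : ψ (x + t • z) ≤ d) (hs : |d - ψ x| / |ψ z| ≤ -s) : ψ (x + s • z) ≤ d := by
  simp only [map_add, map_smul, smul_eq_mul] at ht ⊢
  rcases le_or_gt (ψ z) 0 with hz | hz
  · nlinarith
  · rw [abs_of_pos hz, div_le_iff₀ hz] at hs
    linarith [neg_abs_le (d - ψ x)]

lemma dist_le_of_isNearestIn_backwardRay_inter_frontier {ι : Type*} [Fintype ι]
    {ψ : ι → E →L[ℝ] ℝ} {d : ι → ℝ} {Q : Set E} (hQ : Q = {p | ∀ i, ψ i p ≤ d i}) {x y z : E}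
    (hx : x ∉ Q) (hy : IsNearestIn (backwardRay x z ∩ frontier Q) x y) :
    dist x y ≤ (∑ i, |d i - ψ i x| / |ψ i z|) * ‖z‖ := by
  set R := ∑ i, |d i - ψ i x| / |ψ i z|
  obtain ⟨⟨⟨t, ht, rfl⟩, hyQ⟩, hmin⟩ := hy
  have hyQ' : x + t • z ∈ Q := by
    have hQc : IsClosed Q := by
      rw [hQ, Set.ofPred_forall]
      exact isClosed_iInter fun i => isClosed_le (ψ i).continuous continuous_const
    exact hQc.frontier_subset hyQ
  rcases le_or_gt (-t) R with htR | hRt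
  · rw [dist_self_add_smul_of_nonpos x z ht]; gcongr
  have hRQ : x + (-R) • z ∈ Q := by
    rw [hQ] at hyQ' ⊢
    refine fun i => apply_add_smul_le_of_div_le (by linarith) (hyQ' i) ?_
    rw [neg_neg]
    exact Finset.single_le_sum (f := fun j => |d j - ψ j x| / |ψ j z|)
      (fun j _ => by positivity) (Finset.mem_univ i)
  obtain ⟨w, hw, hxw⟩ := exists_mem_backwardRay_inter_frontier hx
    (neg_nonpos.mpr (Finset.sum_nonneg fun i _ => by positivity)) hRQ
  rw [neg_neg] at hxw
  exact (hmin w hw).trans hxw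

lemma tendsto_of_isNearestIn_backwardRay_inter_frontier {α ι : Type*} [Fintype ι] {L : Filter α}
    {ψ : ι → E →L[ℝ] ℝ} {d : ι → ℝ} {Q : Set E} (hQ : Q = {p | ∀ i, ψ i p ≤ d i})
    {x y : α → E} {z xlim : E} (hxQ : ∀ a, x a ∉ Q) (hlim : Tendsto x L (𝓝 xlim))
    (hxlim : ∀ i, ψ i xlim = d i)
    (hy : ∀ a, IsNearestIn (backwardRay (x a) z ∩ frontier Q) (x a) (y a)) :
    Tendsto y L (𝓝 xlim) := by
  refine hlim.congr_dist (squeeze_zero (fun _ => dist_nonneg)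
    (fun a => dist_le_of_isNearestIn_backwardRay_inter_frontier hQ (hxQ a) (hy a)) ?_)
  have hbound : Continuous fun p => (∑ i, |d i - ψ i p| / |ψ i z|) * ‖z‖ := by fun_prop
  simpa [hxlim, Function.comp_def] using (hbound.tendsto xlim).comp hlim

theorem subseq_of_closest_boundary_points_tendsto_general
    (l k : ℕ) (φ : Fin k → ((Fin l → ℝ) →ₗ[ℝ] ℝ))
    (c : Fin k → ℝ) (σ : Fin k → Bool)
    (W : Fin k → Set (Fin l → ℝ))
    (hW : ∀ i, W i = if σ i then {x | φ i x ≤ c i} else {x | c i ≤ φ i x})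
    (Q : Set (Fin l → ℝ)) (hQ : Q = ⋂ i, W i)
    (z : Fin l → ℝ)
    (x : ℕ → Fin l → ℝ) (hxQ : ∀ m, x m ∉ Q)
    (xlim : Fin l → ℝ) (hlim : Filter.Tendsto x Filter.atTop (nhds xlim))
    (hxH : ∀ i, φ i xlim = c i)
    (y : ℕ → Fin l → ℝ)
    (hy : ∀ m, y m ∈ {p | ∃ t : ℝ, t ≤ 0 ∧ p = x m + t • z} ∩ frontier Q ∧
      ∀ w ∈ {p | ∃ t : ℝ, t ≤ 0 ∧ p = x m + t • z} ∩ frontier Q,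
        dist (x m) (y m) ≤ dist (x m) w) :
    ∃ g : ℕ → ℕ, StrictMono g ∧
      Filter.Tendsto (fun j => y (g j)) Filter.atTop (nhds xlim) := by
  let ψ i := LinearMap.toContinuousLinearMap (if σ i then φ i else -φ i)
  let d i := if σ i then c i else -c i
  have hQψ : Q = {p | ∀ i, ψ i p ≤ d i} := by
    ext p
    simp only [hQ, hW, Set.mem_iInter, Set.mem_ofPred_eq]
    refine forall_congr' fun i => ?_
    by_cases h : σ i <;> simp [ψ, d, h]
  have hxlim : ∀ i, ψ i xlim = d i := fun i => by by_cases h : σ i <;> simp [ψ, d, h, hxH i]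
  exact ⟨id, strictMono_id, tendsto_of_isNearestIn_backwardRay_inter_frontier hQψ hxQ hlim hxlim hy⟩

/-- **Closest boundary points along a fixed direction converge to the limit.**
Let `W₁, …, W_k` be closed half-spaces of `ℝˡ` bounded by affine hyperplanes
`Hᵢ = {x : φᵢ x = cᵢ}`, and `Q = W₁ ∩ … ∩ W_k`. Fix `z ∈ ℝˡ` and let `xₘ ∈ ℝˡ \ Q`
converge to `x_∞` with `x_∞ ∈ Hᵢ` for all `i`. Assume for each `m ∈ ℕ ∪ {∞}` there is a
point `yₘ ∈ (xₘ + ℝ₋z) ∩ ∂Q` at minimal distance from `xₘ`. Then some subsequence of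
`(yₘ)` converges to `x_∞`. -/
theorem subseq_of_closest_boundary_points_tendsto
    (l k : ℕ) (φ : Fin k → ((Fin l → ℝ) →ₗ[ℝ] ℝ)) (hφ : ∀ i, φ i ≠ 0)
    (c : Fin k → ℝ) (σ : Fin k → Bool)
    (W : Fin k → Set (Fin l → ℝ))
    (hW : ∀ i, W i = if σ i then {x | φ i x ≤ c i} else {x | c i ≤ φ i x})
    (Q : Set (Fin l → ℝ)) (hQ : Q = ⋂ i, W i)
    (z : Fin l → ℝ)
    (x : ℕ → Fin l → ℝ) (hxQ : ∀ m, x m ∉ Q)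
    (xlim : Fin l → ℝ) (hlim : Filter.Tendsto x Filter.atTop (nhds xlim))
    (hxH : ∀ i, φ i xlim = c i)
    (y : ℕ → Fin l → ℝ) (ylim : Fin l → ℝ)
    (hy : ∀ m, y m ∈ {p | ∃ t : ℝ, t ≤ 0 ∧ p = x m + t • z} ∩ frontier Q ∧
      ∀ w ∈ {p | ∃ t : ℝ, t ≤ 0 ∧ p = x m + t • z} ∩ frontier Q,
        dist (x m) (y m) ≤ dist (x m) w)
    (hylim : ylim ∈ {p | ∃ t : ℝ, t ≤ 0 ∧ p = xlim + t • z} ∩ frontier Q ∧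
      ∀ w ∈ {p | ∃ t : ℝ, t ≤ 0 ∧ p = xlim + t • z} ∩ frontier Q,
        dist xlim ylim ≤ dist xlim w) :
    ∃ g : ℕ → ℕ, StrictMono g ∧
      Filter.Tendsto (fun j => y (g j)) Filter.atTop (nhds xlim) :=
  subseq_of_closest_boundary_points_tendsto_general l k φ c σ W hW Q hQ z x hxQ xlim hlim hxH y hy
end
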